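/- arXiv:2312.05000 — 7 statements merged into one kernel-verified Lean document; each statement's English description precedes it below -/
import Mathlib

section
/- Let P = {(x,y,z) ∈ ℝ³ : x + y + z = 4}, regarded as a subset of ℝ³ equipped with the supremum norm ‖(x,y,z)‖∞ = max(|x|,|y|,|z|). Then P is not a nonexpansive retract of ℓ∞³: there is no map r : ℝ³ → ℝ³ with ‖r(u) − r(v)‖∞ ≤ ‖u − v‖∞ for all u, v, whose range is contained in P and which satisfies r(p) = p for every p ∈ P. -/
/-!
Let `q = r 0`. For each coordinate `j`, the point `b` with `b j = -4` and all other coordinates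
`4` lies on the plane and has sup-norm `4`, so `|q j - b j| ≤ ‖r 0 - r b‖ ≤ ‖0 - b‖ = 4` forces
`q j ≤ 0`. Hence `q 0 + q 1 + q 2 ≤ 0 < 4`, contradicting `q ∈ P`. The same works for any
hyperplane `∑ i, x i = s` with `s > 0` in `ℓ∞ⁿ`, `n ≥ 3`, with `±4` replaced by `±s / (n - 2)`.
-/

open Finset

def sumPlane (n : ℕ) (s : ℝ) : Set (Fin n → ℝ) :=
  {p | ∑ i, p i = s}

def flipAt {n : ℕ} (j : Fin n) (t : ℝ) : Fin n → ℝ :=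
  Function.update (fun _ => t) j (-t)

lemma sum_flipAt {n : ℕ} (j : Fin n) (t : ℝ) : ∑ i, flipAt j t i = ((n : ℝ) - 2) * t := by
  rw [flipAt, sum_update_of_mem (mem_univ j), sum_const, card_univ_sdiff, card_singleton,
    Fintype.card_fin, nsmul_eq_mul, Nat.cast_sub (Fin.pos j)]
  push_cast
  ring

lemma norm_flipAt_le {n : ℕ} (j : Fin n) {t : ℝ} (ht : 0 ≤ t) : ‖flipAt j t‖ ≤ t := by
  refine (pi_norm_le_iff_of_nonneg ht).mpr fun i => ?_
  by_cases hi : i = j <;> simp [flipAt, hi, abs_of_nonneg ht]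

lemma LipschitzWith.dist_le_of_apply_eq {α : Type*} [PseudoMetricSpace α] {f : α → α}
    (hf : LipschitzWith 1 f) {x y : α} (hy : f y = y) : dist (f x) y ≤ dist x y := by
  simpa [hy] using hf.dist_le_mul x y

lemma apply_zero_nonpos_of_lipschitzWith_of_fixes_sumPlane {n : ℕ} (hn : 3 ≤ n) {s : ℝ}
    (hs : 0 ≤ s) {r : (Fin n → ℝ) → (Fin n → ℝ)} (hr : LipschitzWith 1 r) (hfix : ∀ p ∈ sumPlane n s, r p = p)
    (j : Fin n) : r 0 j ≤ 0 := by
  set t := s / ((n : ℝ) - 2)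
  have hn2 : (0 : ℝ) < n - 2 := by
    have : (3 : ℝ) ≤ n := by exact_mod_cast hn
    linarith
  have ht : 0 ≤ t := div_nonneg hs hn2.le
  have hb : flipAt j t ∈ sumPlane n s := by
    simp only [sumPlane, Set.mem_ofPred_eq, sum_flipAt, t]
    field_simp
  have hcoord : r 0 j - flipAt j t j ≤ t :=
    calc r 0 j - flipAt j t j ≤ dist (r 0 j) (flipAt j t j) := le_abs_self _
      _ ≤ dist (r 0) (flipAt j t) := dist_le_pi_dist _ _ j
      _ ≤ dist 0 (flipAt j t) := hr.dist_le_of_apply_eq (hfix _ hb)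
      _ ≤ t := by simpa using norm_flipAt_le j ht
  simpa [flipAt] using hcoord

theorem not_exists_lipschitzWith_retraction_sumPlane {n : ℕ} (hn : 3 ≤ n) {s : ℝ} (hs : 0 < s) :
    ¬ ∃ r : (Fin n → ℝ) → (Fin n → ℝ),
      LipschitzWith 1 r ∧ Set.range r ⊆ sumPlane n s ∧ ∀ p ∈ sumPlane n s, r p = p := by
  rintro ⟨r, hr, hrange, hfix⟩
  have hsum : ∑ i, r 0 i = s := hrange ⟨0, rfl⟩
  have hle : ∑ i, r 0 i ≤ 0 :=
    sum_nonpos fun j _ => apply_zero_nonpos_of_lipschitzWith_of_fixes_sumPlane hn hs.le hr hfix j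
  linarith

/-- The plane `x + y + z = 4` in `ℓ∞³` (that is, `ℝ³` with the supremum norm,
here `Fin 3 → ℝ` with its sup-norm) is not a nonexpansive retract of `ℓ∞³`. -/
theorem plane_not_nonexpansive_retract_linfty3 :
    ¬ ∃ r : (Fin 3 → ℝ) → (Fin 3 → ℝ),
      LipschitzWith 1 r ∧
      Set.range r ⊆ {p : Fin 3 → ℝ | p 0 + p 1 + p 2 = 4} ∧
      ∀ p ∈ {p : Fin 3 → ℝ | p 0 + p 1 + p 2 = 4}, r p = p := by
  have hplane : {p : Fin 3 → ℝ | p 0 + p 1 + p 2 = 4} = sumPlane 3 4 := by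
    simp only [sumPlane, Fin.sum_univ_three]
  rw [hplane]
  exact not_exists_lipschitzWith_retraction_sumPlane le_rfl four_pos
end

section
/- Let X be an infinite-dimensional real Banach space. Then there exists a continuous map f from the closed unit ball B_X = {x ∈ X : ‖x‖ ≤ 1} into itself with no fixed point, i.e., f(x) ≠ x for every x ∈ B_X. -/
/-!
Riesz's lemma gives unit vectors `x n` each at distance at least `1 / 2` from the span of the
previous ones. The polygonal path `γ` through them stays in the unit ball, and two of its
points whose parameters differ by at least `3` lie on segments one of which is contained in a
subspace that the other avoids by a definite amount, so `dist (γ s) (γ t) ≥ 1 / 12`. Hence the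
tails `γ '' [n, ∞)` are eventually uniformly far from every point, and the sum of bump functions
of these tails is a continuous `ρ` with `τ ≤ ρ (γ τ)`. The map `x ↦ γ (max (ρ x) 0 + 1)` has no
fixed point, since a fixed point would satisfy `ρ x + 1 ≤ ρ x`.
-/

open Set Metric Filter Topology Submodule

section Riesz

variable {X : Type*} [NormedAddCommGroup X] [NormedSpace ℝ X]

theorem exists_norm_eq_one_le_norm_sub_of_finset (hX : ¬ FiniteDimensional ℝ X) {r : ℝ}
    (hr : r < 1) (s : Finset X) :
    ∃ v : X, ‖v‖ = 1 ∧ ∀ y ∈ span ℝ (s : Set X), r ≤ ‖v - y‖ := by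
  have hproper : ∃ x, x ∉ span ℝ (s : Set X) := by
    by_contra! h
    exact hX (Module.finite_def.2 (eq_top_iff'.2 h ▸ fg_span s.finite_toSet))
  obtain ⟨v, -, hv⟩ := riesz_lemma_of_lt_one (closed_of_finiteDimensional _) hproper hr
  exact ⟨v, hv⟩

theorem exists_seq_norm_eq_one_le_norm_sub_span (hX : ¬ FiniteDimensional ℝ X) {r : ℝ}
    (hr : r < 1) :
    ∃ x : ℕ → X, (∀ n, ‖x n‖ = 1) ∧ ∀ n, ∀ y ∈ span ℝ (x '' Iio n), r ≤ ‖x n - y‖ := by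
  classical
  choose v hv_norm hv_far using exists_norm_eq_one_le_norm_sub_of_finset hX hr
  let s : ℕ → Finset X := fun n => Nat.rec ∅ (fun _ t => insert (v t) t) n
  have hs : Monotone s := monotone_nat_of_le_succ fun n => Finset.subset_insert _ _
  refine ⟨fun n => v (s n), fun n => hv_norm _, fun n y hy => hv_far _ y (span_mono ?_ hy)⟩
  rintro _ ⟨m, hm, rfl⟩
  exact hs (Nat.succ_le_of_lt hm) (Finset.mem_insert_self _ _)

theorem mul_le_norm_smul_sub {V : Submodule ℝ X} {a v : X} {δ c : ℝ}
    (ha : ∀ w ∈ V, δ ≤ ‖a - w‖) (hc : 0 < c) (hv : v ∈ V) : c * δ ≤ ‖c • a - v‖ := by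
  rw [show c • a - v = c • (a - c⁻¹ • v) by rw [smul_sub, smul_inv_smul₀ hc.ne'], norm_smul,
    Real.norm_of_nonneg hc.le]
  exact mul_le_mul_of_nonneg_left (ha _ (V.smul_mem _ hv)) hc.le

theorem sq_div_three_le_norm_sub_of_mem_segment {V : Submodule ℝ X} {a b y z : X} {δ : ℝ}
    (hδ : 0 ≤ δ) (hb : ‖b‖ ≤ 1) (ha_far : ∀ w ∈ V, δ ≤ ‖a - w‖)
    (hb_far : ∀ w ∈ V ⊔ ℝ ∙ a, δ ≤ ‖b - w‖) (hz : z ∈ segment ℝ a b) (hy : y ∈ V) :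
    δ ^ 2 / 3 ≤ ‖z - y‖ := by
  obtain ⟨p, q, hp, hq, hpq, rfl⟩ := hz
  have hδ_le : δ ≤ 1 := (hb_far 0 (zero_mem _)).trans (by simpa using hb)
  rcases lt_or_ge (δ / 3) q with hq_big | hq_small
  · -- `b` is far from `V ⊔ ℝ ∙ a`, which contains `y - p • a`
    have hmem : y - p • a ∈ V ⊔ ℝ ∙ a :=
      sub_mem (mem_sup_left hy) (mem_sup_right (smul_mem _ _ (mem_span_singleton_self a)))
    have h := mul_le_norm_smul_sub hb_far (by linarith : (0 : ℝ) < q) hmem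
    rw [show q • b - (y - p • a) = p • a + q • b - y by abel] at h
    nlinarith
  · -- `z` is within `q` of `p • a`, which is far from `V`
    have h := mul_le_norm_smul_sub ha_far (by linarith : 0 < p) hy
    have htri : ‖p • a - y‖ ≤ ‖p • a + q • b - y‖ + ‖q • b‖ := by
      have h := norm_sub_le (p • a + q • b - y) (q • b)
      rwa [show p • a + q • b - y - q • b = p • a - y by abel] at h
    have hqb : ‖q • b‖ ≤ q := by
      rw [norm_smul, Real.norm_of_nonneg hq]
      exact mul_le_of_le_one_right hq hb
    nlinarith

end Riesz

section PolygonalPath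

variable {E : Type*} [AddCommGroup E] [Module ℝ E]

noncomputable def polygonalPath (x : ℕ → E) (τ : ℝ) : E :=
  x 0 + ∑ᶠ k : ℕ, (projIcc (0 : ℝ) 1 zero_le_one (τ - k) : ℝ) • (x (k + 1) - x k)

theorem polygonalPath_eq_sum (x : ℕ → E) {τ : ℝ} {N : ℕ} (hτ : τ ≤ N) :
    polygonalPath x τ = x 0 +
      ∑ k ∈ Finset.range N, (projIcc (0 : ℝ) 1 zero_le_one (τ - k) : ℝ) • (x (k + 1) - x k) := by
  rw [polygonalPath, finsum_eq_finsetSum_of_support_subset]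
  refine Function.support_subset_iff'.2 fun k hk => ?_
  have hNk : (N : ℝ) ≤ k := by exact_mod_cast not_lt.1 (Finset.mem_range.not.1 hk)
  rw [projIcc_of_le_left _ (by linarith)]
  exact zero_smul ℝ _

theorem polygonalPath_eq_lineMap (x : ℕ → E) {n : ℕ} {τ : ℝ} (h₀ : (n : ℝ) ≤ τ)
    (h₁ : τ ≤ n + 1) : polygonalPath x τ = AffineMap.lineMap (x n) (x (n + 1)) (τ - n) := by
  have hfull : ∀ k ∈ Finset.range n,
      (projIcc (0 : ℝ) 1 zero_le_one (τ - k) : ℝ) • (x (k + 1) - x k) = x (k + 1) - x k := by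
    intro k hk
    have hkn : (k : ℝ) + 1 ≤ n := by exact_mod_cast Finset.mem_range.1 hk
    rw [projIcc_of_right_le _ (by linarith), one_smul]
  rw [polygonalPath_eq_sum x (N := n + 1) (by push_cast; linarith), Finset.sum_range_succ,
    Finset.sum_congr rfl hfull, Finset.sum_range_sub, projIcc_of_mem _ ⟨by linarith, by linarith⟩,
    AffineMap.lineMap_apply_module']
  abel

theorem polygonalPath_mem_segment (x : ℕ → E) {τ : ℝ} (hτ : 0 ≤ τ) :
    polygonalPath x τ ∈ segment ℝ (x ⌊τ⌋₊) (x (⌊τ⌋₊ + 1)) := by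
  have h₀ := Nat.floor_le hτ
  have h₁ := Nat.lt_floor_add_one τ
  rw [polygonalPath_eq_lineMap x h₀ h₁.le]
  exact lineMap_mem_segment ℝ _ _ ⟨by linarith, by linarith⟩

theorem continuous_polygonalPath [TopologicalSpace E] [IsTopologicalAddGroup E]
    [ContinuousSMul ℝ E] (x : ℕ → E) : Continuous (polygonalPath x) := by
  refine continuous_iff_continuousAt.2 fun τ₀ => ?_
  obtain ⟨N, hN⟩ := exists_nat_gt τ₀
  have hloc : polygonalPath x =ᶠ[𝓝 τ₀] fun τ => x 0 +
      ∑ k ∈ Finset.range N, (projIcc (0 : ℝ) 1 zero_le_one (τ - k) : ℝ) • (x (k + 1) - x k) :=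
    eventually_of_mem (Iio_mem_nhds hN) fun τ hτ => polygonalPath_eq_sum x (le_of_lt hτ)
  refine ContinuousAt.congr ?_ hloc.symm
  have := continuous_projIcc (a := (0 : ℝ)) (b := 1) (h := zero_le_one)
  fun_prop

end PolygonalPath

section Escape

variable {E : Type*} [PseudoMetricSpace E]

theorem Antitone.exists_continuous_add_one_le_of_le_infDist {T : ℕ → Set E} (hT : Antitone T)
    {δ : ℝ} (hδ : 0 < δ) (hfar : ∀ y, ∀ᶠ n in atTop, δ ≤ infDist y (T n)) :
    ∃ ρ : E → ℝ, Continuous ρ ∧ ∀ n, ∀ y ∈ T n, (n : ℝ) + 1 ≤ ρ y := by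
  let σ : ℕ → E → ℝ := fun n y => max 0 (1 - 2 * infDist y (T n) / δ)
  have hσ_zero : ∀ n y, δ / 2 ≤ infDist y (T n) → σ n y = 0 := fun n y h => by
    refine max_eq_left ?_
    rw [sub_nonpos, le_div_iff₀ hδ]
    linarith
  have hσ_one : ∀ n y, y ∈ T n → σ n y = 1 := fun n y h => by
    simp [σ, infDist_zero_of_mem h]
  have hσ_eventually_zero : ∀ y : E, ∃ N : ℕ, ∀ n ≥ N, ∀ z ∈ Metric.ball y (δ / 2), σ n z = 0 :=
    fun y => by
      obtain ⟨N, hN⟩ := (hfar y).exists_forall_of_atTop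
      refine ⟨N, fun n hn z hz => hσ_zero n z ?_⟩
      have := (hN n hn).trans (infDist_le_infDist_add_dist (y := z))
      rw [mem_ball'] at hz
      linarith
  have hσ_locallyFinite : LocallyFinite fun n => Function.support (σ n) := fun y => by
    obtain ⟨N, hN⟩ := hσ_eventually_zero y
    refine ⟨Metric.ball y (δ / 2), ball_mem_nhds y (by linarith), (finite_lt_nat N).subset ?_⟩
    rintro n ⟨z, hz, hzy⟩
    by_contra hn
    exact hz (hN n (not_lt.1 hn) z hzy)
  refine ⟨fun y => ∑ᶠ n, σ n y, continuous_finsum (fun n => by fun_prop) hσ_locallyFinite,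
    fun n y hy => ?_⟩
  obtain ⟨N, hN⟩ := hσ_eventually_zero y
  have hy_ball := mem_ball_self (x := y) (half_pos hδ)
  have hnN : n < N := by
    by_contra! h
    simpa [hσ_one n y hy] using hN n h y hy_ball
  dsimp only
  rw [finsum_eq_finsetSum_of_support_subset _ (s := Finset.range N)
    (Function.support_subset_iff'.2 fun k hk => hN k (by simpa using hk) y hy_ball)]
  calc (n : ℝ) + 1 = ∑ k ∈ Finset.range (n + 1), σ k y := by
        rw [Finset.sum_congr rfl fun k hk => hσ_one k y (hT (Finset.mem_range_succ_iff.1 hk) hy)]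
        simp
    _ ≤ ∑ k ∈ Finset.range N, σ k y :=
        Finset.sum_le_sum_of_subset_of_nonneg (Finset.range_subset_range.2 hnN)
          fun k _ _ => le_max_left _ _

theorem eventually_le_infDist_image_Ici {γ : ℝ → E} {δ L : ℝ}
    (hsep : ∀ s t, 0 ≤ s → s + L ≤ t → δ ≤ dist (γ s) (γ t)) (y : E) :
    ∀ᶠ n : ℕ in atTop, δ / 2 ≤ infDist y (γ '' Ici (n : ℝ)) := by
  by_cases hnear : ∃ s, 0 ≤ s ∧ dist (γ s) y < δ / 2
  · obtain ⟨s, hs, hsy⟩ := hnear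
    filter_upwards [eventually_ge_atTop ⌈s + L⌉₊] with n hn
    rw [le_infDist (nonempty_Ici.image γ)]
    rintro _ ⟨t, ht, rfl⟩
    have hst := hsep s t hs ((Nat.le_ceil _).trans ((Nat.cast_le.2 hn).trans ht))
    linarith [dist_triangle (γ s) y (γ t)]
  · push Not at hnear
    refine Eventually.of_forall fun n => (le_infDist (nonempty_Ici.image γ)).2 ?_
    rintro _ ⟨t, ht, rfl⟩
    rw [dist_comm]
    exact hnear t ((Nat.cast_nonneg n).trans ht)

theorem exists_continuous_selfMap_forall_ne_of_mapsTo_Ici {S : Set E} {γ : ℝ → E}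
    (hγ : Continuous γ) (hγS : MapsTo γ (Ici 0) S) {δ L : ℝ} (hδ : 0 < δ)
    (hsep : ∀ s t, 0 ≤ s → s + L ≤ t → δ ≤ dist (γ s) (γ t)) :
    ∃ f : S → S, Continuous f ∧ ∀ x, f x ≠ x := by
  have hT : Antitone fun n : ℕ => γ '' Ici (n : ℝ) := fun m n hmn =>
    image_mono (Ici_subset_Ici.2 (Nat.cast_le.2 hmn))
  obtain ⟨ρ, hρ, hρ_tail⟩ := hT.exists_continuous_add_one_le_of_le_infDist (half_pos hδ)
    (eventually_le_infDist_image_Ici hsep)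
  have hρ_ge : ∀ τ, 0 ≤ τ → τ ≤ ρ (γ τ) := fun τ hτ =>
    (Nat.lt_floor_add_one τ).le.trans (hρ_tail _ _ ⟨τ, Nat.floor_le hτ, rfl⟩)
  refine ⟨fun x => ⟨γ (max (ρ x) 0 + 1), hγS (mem_Ici.2 (by positivity))⟩, by fun_prop,
    fun x hx => ?_⟩
  have hfix : γ (max (ρ x) 0 + 1) = x := congrArg Subtype.val hx
  have := hρ_ge (max (ρ x) 0 + 1) (by positivity)
  rw [hfix] at this
  linarith [le_max_left (ρ x) 0]

end Escape

theorem exists_continuous_mapsTo_closedBall_le_dist_of_not_finiteDimensional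
    {X : Type*} [NormedAddCommGroup X] [NormedSpace ℝ X] (hX : ¬ FiniteDimensional ℝ X) :
    ∃ γ : ℝ → X, Continuous γ ∧ MapsTo γ (Ici 0) (closedBall 0 1) ∧
      ∀ s t, 0 ≤ s → s + 3 ≤ t → 1 / 12 ≤ dist (γ s) (γ t) := by
  obtain ⟨x, hx_norm, hx_far⟩ :=
    exists_seq_norm_eq_one_le_norm_sub_span hX (by norm_num : (1 / 2 : ℝ) < 1)
  have hx_ball : ∀ n, x n ∈ closedBall (0 : X) 1 := fun n =>
    mem_closedBall_zero_iff.2 (hx_norm n).le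
  refine ⟨polygonalPath x, continuous_polygonalPath x, fun τ hτ =>
    (convex_closedBall 0 1).segment_subset (hx_ball _) (hx_ball _)
      (polygonalPath_mem_segment x hτ), fun s t hs hst => ?_⟩
  set m := ⌊t⌋₊
  have hm : ⌊s⌋₊ + 2 ≤ m := Nat.le_floor (by push_cast; linarith [Nat.floor_le hs])
  set V := span ℝ (x '' Iio m)
  have hV : ∀ {k}, k < m → x k ∈ V := fun hk => subset_span ⟨_, hk, rfl⟩
  have hsV : polygonalPath x s ∈ V :=
    V.convex.segment_subset (hV (by omega)) (hV (by omega)) (polygonalPath_mem_segment x hs)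
  have hsup : V ⊔ ℝ ∙ x m ≤ span ℝ (x '' Iio (m + 1)) :=
    sup_le (span_mono (image_mono (Iio_subset_Iio m.le_succ)))
      ((span_singleton_le_iff_mem _ _).2 (subset_span ⟨m, m.lt_succ_self, rfl⟩))
  have := sq_div_three_le_norm_sub_of_mem_segment (by norm_num) (hx_norm _).le (hx_far m)
    (fun w hw => hx_far (m + 1) w (hsup hw)) (polygonalPath_mem_segment x (by linarith)) hsV
  rw [dist_comm, dist_eq_norm]
  linarith

theorem exists_fixed_point_free_continuous_selfmap_of_ball_general
    {X : Type*} [NormedAddCommGroup X] [NormedSpace ℝ X]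
    (hX : ¬ FiniteDimensional ℝ X) :
    ∃ f : Metric.closedBall (0 : X) 1 → Metric.closedBall (0 : X) 1,
      Continuous f ∧ ∀ x, f x ≠ x := by
  obtain ⟨γ, hγ, hγ_ball, hγ_sep⟩ :=
    exists_continuous_mapsTo_closedBall_le_dist_of_not_finiteDimensional hX
  exact exists_continuous_selfMap_forall_ne_of_mapsTo_Ici hγ hγ_ball (by norm_num) hγ_sep

/-- Every infinite-dimensional real Banach space admits a continuous self-map of its
closed unit ball without fixed points. -/
theorem exists_fixed_point_free_continuous_selfmap_of_ball
    {X : Type*} [NormedAddCommGroup X] [NormedSpace ℝ X] [CompleteSpace X]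
    (hX : ¬ FiniteDimensional ℝ X) :
    ∃ f : Metric.closedBall (0 : X) 1 → Metric.closedBall (0 : X) 1,
      Continuous f ∧ ∀ x, f x ≠ x :=
  exists_fixed_point_free_continuous_selfmap_of_ball_general hX
end

section
/- Let ℓ∞ be the Banach space of bounded real sequences with the supremum norm, and let c₀ = {x ∈ ℓ∞ : x_n → 0 as n → ∞} be the closed subspace of null sequences. Then c₀ is a 2-Lipschitz retract of ℓ∞: there exists a map r : ℓ∞ → ℓ∞ with ‖r(x) − r(y)‖∞ ≤ 2‖x − y‖∞ for all x, y ∈ ℓ∞, whose range is contained in c₀, and with r(x) = x for every x ∈ c₀. -/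
/-!
Let `s = limsup ‖xₙ‖` and replace every coordinate `xₙ` by its soft thresholding at level `s`,
i.e. `xₙ` minus its clamp to `[-s, s]`. The result is a null sequence, since eventually
`|xₙ| < s + ε`, and it is `x` itself when `x` is null, since then `s = 0`. Soft thresholding
`(s, a) ↦ a - clamp_s a` is 1-Lipschitz in each variable separately, and `x ↦ limsup ‖xₙ‖` is
1-Lipschitz on `ℓ∞`, which gives the constant `1 + 1 = 2`.
-/

open Filter
open scoped ENNReal

/-- `c₀`, the set of null sequences, viewed as a subset of the Banach space `ℓ∞` of
bounded real sequences with the supremum norm. -/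
def cZero : Set (lp (fun _ : ℕ => ℝ) ∞) :=
  {x | Tendsto (fun n => x n) atTop (nhds 0)}

open Topology

noncomputable def softThreshold (s a : ℝ) : ℝ := a - max (-s) (min s a)

theorem abs_softThreshold_sub_softThreshold_left_le (s a b : ℝ) :
    |softThreshold s a - softThreshold s b| ≤ |a - b| := by
  unfold softThreshold
  rw [abs_le]
  simp only [max_def, min_def]
  split_ifs <;> constructor <;> linarith [le_abs_self (a - b), neg_abs_le (a - b)]

theorem abs_softThreshold_sub_softThreshold_right_le (s t a : ℝ) :
    |softThreshold s a - softThreshold t a| ≤ |s - t| := by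
  unfold softThreshold
  rw [abs_le]
  simp only [max_def, min_def]
  split_ifs <;> constructor <;> linarith [le_abs_self (s - t), neg_abs_le (s - t)]

theorem abs_softThreshold_sub_softThreshold_le (s t a b : ℝ) :
    |softThreshold s a - softThreshold t b| ≤ |a - b| + |s - t| :=
  calc |softThreshold s a - softThreshold t b|
      ≤ |softThreshold s a - softThreshold s b| + |softThreshold s b - softThreshold t b| :=
        abs_sub_le _ _ _
    _ ≤ |a - b| + |s - t| :=
        add_le_add (abs_softThreshold_sub_softThreshold_left_le s a b)
          (abs_softThreshold_sub_softThreshold_right_le s t b)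

theorem abs_softThreshold {s : ℝ} (hs : 0 ≤ s) (a : ℝ) :
    |softThreshold s a| = max (|a| - s) 0 := by
  unfold softThreshold
  simp only [abs_eq_max_neg, max_def, min_def]
  split_ifs <;> linarith

theorem softThreshold_zero_left (a : ℝ) : softThreshold 0 a = a := by
  simp [softThreshold]

section LimsupNorm

variable {E : Type*} [NormedAddCommGroup E]

noncomputable def limsupNorm (x : lp (fun _ : ℕ => E) ∞) : ℝ := limsup (fun n => ‖x n‖) atTop

theorem isBoundedUnder_le_norm_apply (x : lp (fun _ : ℕ => E) ∞) :
    IsBoundedUnder (· ≤ ·) atTop (fun n => ‖x n‖) :=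
  isBoundedUnder_of ⟨‖x‖, lp.norm_apply_le_norm ENNReal.top_ne_zero x⟩

theorem isCoboundedUnder_le_norm_apply (x : lp (fun _ : ℕ => E) ∞) :
    IsCoboundedUnder (· ≤ ·) atTop (fun n => ‖x n‖) :=
  isCoboundedUnder_le_of_le atTop fun n => norm_nonneg (x n)

theorem limsupNorm_nonneg (x : lp (fun _ : ℕ => E) ∞) : 0 ≤ limsupNorm x :=
  le_limsup_of_frequently_le (Frequently.of_forall fun n => norm_nonneg (x n))
    (isBoundedUnder_le_norm_apply x)

theorem limsupNorm_le_add_norm_sub (x y : lp (fun _ : ℕ => E) ∞) :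
    limsupNorm x ≤ limsupNorm y + ‖x - y‖ := by
  have hbound : ∀ n, ‖x n‖ ≤ ‖y n‖ + ‖x - y‖ := fun n =>
    calc ‖x n‖ ≤ ‖y n‖ + ‖x n - y n‖ := norm_le_norm_add_norm_sub' (x n) (y n)
      _ ≤ ‖y n‖ + ‖x - y‖ := by
        gcongr
        exact lp.norm_apply_le_norm ENNReal.top_ne_zero (x - y) n
  calc limsupNorm x ≤ limsup (fun n => ‖y n‖ + ‖x - y‖) atTop :=
        limsup_le_limsup (Eventually.of_forall hbound) (isCoboundedUnder_le_norm_apply x)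
          (isBoundedUnder_le_add (isBoundedUnder_le_norm_apply y) isBoundedUnder_const)
    _ = limsupNorm y + ‖x - y‖ :=
        limsup_add_const atTop _ _ (isBoundedUnder_le_norm_apply y)
          (isCoboundedUnder_le_norm_apply y)

theorem abs_limsupNorm_sub_limsupNorm_le (x y : lp (fun _ : ℕ => E) ∞) :
    |limsupNorm x - limsupNorm y| ≤ ‖x - y‖ := by
  rw [abs_sub_le_iff]
  constructor
  · linarith [limsupNorm_le_add_norm_sub x y]
  · linarith [limsupNorm_le_add_norm_sub y x, norm_sub_rev x y]

theorem limsupNorm_eq_zero_of_tendsto {x : lp (fun _ : ℕ => E) ∞}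
    (hx : Tendsto (fun n => x n) atTop (𝓝 0)) : limsupNorm x = 0 :=
  (tendsto_zero_iff_norm_tendsto_zero.1 hx).limsup_eq

theorem eventually_norm_apply_lt_limsupNorm_add (x : lp (fun _ : ℕ => E) ∞) {ε : ℝ}
    (hε : 0 < ε) : ∀ᶠ n in atTop, ‖x n‖ < limsupNorm x + ε :=
  eventually_lt_of_limsup_lt (lt_add_of_pos_right _ hε) (isBoundedUnder_le_norm_apply x)

end LimsupNorm

theorem memℓp_softThreshold_limsupNorm (x : lp (fun _ : ℕ => ℝ) ∞) :
    Memℓp (fun n => softThreshold (limsupNorm x) (x n)) ∞ :=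
  memℓp_infty_iff.2 ⟨‖x‖, Set.forall_mem_range.2 fun n => by
    have hxn : |x n| ≤ ‖x‖ := lp.norm_apply_le_norm ENNReal.top_ne_zero x n
    rw [Real.norm_eq_abs, abs_softThreshold (limsupNorm_nonneg x)]
    exact max_le (by linarith [limsupNorm_nonneg x]) (norm_nonneg x)⟩

noncomputable def cZeroRetraction (x : lp (fun _ : ℕ => ℝ) ∞) : lp (fun _ : ℕ => ℝ) ∞ :=
  ⟨_, memℓp_softThreshold_limsupNorm x⟩

@[simp]
theorem cZeroRetraction_apply (x : lp (fun _ : ℕ => ℝ) ∞) (n : ℕ) :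
    cZeroRetraction x n = softThreshold (limsupNorm x) (x n) :=
  rfl

theorem lipschitzWith_two_cZeroRetraction : LipschitzWith 2 cZeroRetraction := by
  refine LipschitzWith.of_dist_le_mul fun x y => ?_
  rw [dist_eq_norm, dist_eq_norm, NNReal.coe_ofNat, two_mul]
  refine lp.norm_le_of_forall_le (by positivity) fun n => ?_
  calc ‖(cZeroRetraction x - cZeroRetraction y) n‖
      ≤ |x n - y n| + |limsupNorm x - limsupNorm y| := by
        simpa only [lp.coeFn_sub, Pi.sub_apply, cZeroRetraction_apply, Real.norm_eq_abs]
          using abs_softThreshold_sub_softThreshold_le _ _ (x n) (y n)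
    _ ≤ ‖x - y‖ + ‖x - y‖ := by
        gcongr
        · simpa only [lp.coeFn_sub, Pi.sub_apply, Real.norm_eq_abs]
            using lp.norm_apply_le_norm ENNReal.top_ne_zero (x - y) n
        · exact abs_limsupNorm_sub_limsupNorm_le x y

theorem cZeroRetraction_mem_cZero (x : lp (fun _ : ℕ => ℝ) ∞) : cZeroRetraction x ∈ cZero := by
  refine NormedAddGroup.tendsto_nhds_zero.2 fun ε hε => ?_
  filter_upwards [eventually_norm_apply_lt_limsupNorm_add x hε] with n hn
  rw [Real.norm_eq_abs] at hn
  rw [cZeroRetraction_apply, Real.norm_eq_abs, abs_softThreshold (limsupNorm_nonneg x)]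
  exact max_lt (by linarith) hε

theorem cZeroRetraction_eq_self {x : lp (fun _ : ℕ => ℝ) ∞} (hx : x ∈ cZero) :
    cZeroRetraction x = x := by
  ext n
  rw [cZeroRetraction_apply, limsupNorm_eq_zero_of_tendsto hx, softThreshold_zero_left]

/-- `c₀` is a 2-Lipschitz retract of `ℓ∞`. -/
theorem cZero_two_lipschitz_retract_of_linfty :
    ∃ r : lp (fun _ : ℕ => ℝ) ∞ → lp (fun _ : ℕ => ℝ) ∞,
      LipschitzWith 2 r ∧ Set.range r ⊆ cZero ∧ ∀ x ∈ cZero, r x = x :=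
  ⟨cZeroRetraction, lipschitzWith_two_cZeroRetraction,
    Set.range_subset_iff.2 cZeroRetraction_mem_cZero, fun _ => cZeroRetraction_eq_self⟩
end

section
/- Let X be a real Banach space and K a nonempty compact convex subset of X. Then K is a uniform retract of X: there exists a uniformly continuous map r : X → X whose range is contained in K and which satisfies r(x) = x for every x ∈ K. -/
/-!
A continuous linear map `T : X → ℓ²` that is injective on `K` exists because `K - K` is
separable: weight a sequence of norm-one functionals that norm a dense sequence of `K - K` by
`2⁻ⁿ`. Then `T '' K` is a compact convex subset of a Hilbert space, onto which the nearest-point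
projection is a `1`-Lipschitz retraction. Since `T` restricted to the compact set `K` is a
homeomorphism onto its image, its inverse is uniformly continuous, and composing it with the
projection and `T` gives the retraction of `X` onto `K`.
-/

open scoped InnerProductSpace ENNReal
open Set TopologicalSpace

section NearestPoint

variable {H : Type*} [NormedAddCommGroup H] [InnerProductSpace ℝ H]

theorem norm_sub_le_of_real_inner_le_zero {u u' v w : H} (hv : ⟪u - v, w - v⟫_ℝ ≤ 0)
    (hw : ⟪u' - w, v - w⟫_ℝ ≤ 0) : ‖w - v‖ ≤ ‖u' - u‖ := by
  have hsq : ‖w - v‖ ^ 2 ≤ ‖u' - u‖ * ‖w - v‖ := calc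
    ‖w - v‖ ^ 2 = ⟪u' - u, w - v⟫_ℝ + ⟪u - v, w - v⟫_ℝ + ⟪u' - w, v - w⟫_ℝ := by
      rw [← real_inner_self_eq_norm_sq, ← inner_add_left, ← neg_sub w v, inner_neg_right,
        ← sub_eq_add_neg, ← inner_sub_left]
      congr 1
      abel
    _ ≤ ⟪u' - u, w - v⟫_ℝ := by linarith
    _ ≤ ‖u' - u‖ * ‖w - v‖ := real_inner_le_norm _ _
  nlinarith [norm_nonneg (w - v), norm_nonneg (u' - u)]

theorem exists_lipschitzWith_one_retraction_of_isComplete_of_convex {C : Set H}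
    (hne : C.Nonempty) (hC : IsComplete C) (hconv : Convex ℝ C) :
    ∃ P : H → H, LipschitzWith 1 P ∧ (∀ u, P u ∈ C) ∧ ∀ u ∈ C, P u = u := by
  choose P hPC hPmin using exists_norm_eq_iInf_of_complete_convex hne hC hconv
  have hobtuse u : ∀ w ∈ C, ⟪u - P u, w - P u⟫_ℝ ≤ 0 :=
    (norm_eq_iInf_iff_real_inner_le_zero hconv (hPC u)).1 (hPmin u)
  refine ⟨P, LipschitzWith.of_dist_le_mul fun u u' => ?_, hPC, fun u hu => ?_⟩
  · rw [NNReal.coe_one, one_mul, dist_eq_norm', dist_eq_norm']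
    exact norm_sub_le_of_real_inner_le_zero (hobtuse u _ (hPC u')) (hobtuse u' _ (hPC u))
  · exact (sub_eq_zero.1 (real_inner_self_nonpos.1 (hobtuse u u hu))).symm

end NearestPoint

theorem TopologicalSpace.IsSeparable.exists_seq_strongDual_eq_zero_of_forall {𝕜 E : Type*}
    [RCLike 𝕜] [NormedAddCommGroup E] [NormedSpace 𝕜 E] {t : Set E} (ht : IsSeparable t) :
    ∃ g : ℕ → StrongDual 𝕜 E, (∀ n, ‖g n‖ ≤ 1) ∧ ∀ a ∈ t, (∀ n, g n a = 0) → a = 0 := by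
  obtain ⟨c, hc, htc⟩ := ht
  obtain ⟨u, hu⟩ := (hc.insert 0).exists_eq_range (insert_nonempty 0 c)
  choose g hg_norm hg_eq using fun n => exists_dual_vector'' 𝕜 (u n)
  refine ⟨g, hg_norm, fun a ha hga => ?_⟩
  have hdist n : ‖a‖ ≤ 2 * dist a (u n) := calc
    ‖a‖ ≤ ‖u n‖ + ‖a - u n‖ := norm_le_insert' _ _
    _ = ‖g n (u n - a)‖ + ‖a - u n‖ := by simp [hga n, hg_eq n]
    _ ≤ ‖u n - a‖ + ‖a - u n‖ := by
      gcongr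
      simpa using (g n).le_of_opNorm_le (hg_norm n) (u n - a)
    _ = 2 * dist a (u n) := by rw [norm_sub_rev, dist_eq_norm]; ring
  have ha' : a ∈ closure (range u) := hu ▸ closure_mono (subset_insert 0 c) (htc ha)
  by_contra ha0
  obtain ⟨_, ⟨n, rfl⟩, hn⟩ := Metric.mem_closure_iff.1 ha' (‖a‖ / 2) (by positivity)
  linarith [hdist n]

section WeightedDual

variable {𝕜 E ι : Type*} [RCLike 𝕜] [NormedAddCommGroup E] [NormedSpace 𝕜 E] {p : ℝ≥0∞}

theorem norm_mul_strongDual_le {w : 𝕜} {g : StrongDual 𝕜 E} (hg : ‖g‖ ≤ 1) (x : E) :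
    ‖w * g x‖ ≤ ‖(‖x‖ • w)‖ := by
  rw [norm_mul, norm_smul, norm_norm, mul_comm]
  gcongr
  simpa using g.le_of_opNorm_le hg x

theorem memℓp_weighted_strongDual (w : lp (fun _ : ι => 𝕜) p) {g : ι → StrongDual 𝕜 E}
    (hg : ∀ i, ‖g i‖ ≤ 1) (x : E) : Memℓp (fun i => w i * g i x) p :=
  (lp.memℓp (‖x‖ • w)).mono' fun i => norm_mul_strongDual_le (hg i) x

noncomputable def weightedStrongDualCLM [Fact (1 ≤ p)] (w : lp (fun _ : ι => 𝕜) p)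
    (g : ι → StrongDual 𝕜 E) (hg : ∀ i, ‖g i‖ ≤ 1) : E →L[𝕜] lp (fun _ : ι => 𝕜) p :=
  LinearMap.mkContinuous
    { toFun := fun x => ⟨_, memℓp_weighted_strongDual w hg x⟩
      map_add' := fun x y => lp.ext <| funext fun i => by
        simp only [map_add]
        exact mul_add _ _ _
      map_smul' := fun c x => lp.ext <| funext fun i => by simp [mul_left_comm] }
    ‖w‖ fun x => by
      refine (lp.norm_mono (one_pos.trans_le Fact.out).ne' (y := ‖x‖ • w) fun i =>
        norm_mul_strongDual_le (hg i) x).trans ?_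
      rw [norm_smul, norm_norm, mul_comm]

@[simp]
theorem weightedStrongDualCLM_apply [Fact (1 ≤ p)] (w : lp (fun _ : ι => 𝕜) p)
    (g : ι → StrongDual 𝕜 E) (hg : ∀ i, ‖g i‖ ≤ 1) (x : E) (i : ι) :
    weightedStrongDualCLM w g hg x i = w i * g i x :=
  rfl

end WeightedDual

theorem memℓp_two_geometric_two_inv : Memℓp (fun n : ℕ => (2⁻¹ : ℝ) ^ n) 2 :=
  (memℓp_gen (by simpa using summable_geometric_two)).of_exponent_ge (by norm_num : (1 : ℝ≥0∞) ≤ 2)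

theorem TopologicalSpace.IsSeparable.exists_continuousLinearMap_lp_two_injOn {E : Type*}
    [NormedAddCommGroup E] [NormedSpace ℝ E] {s : Set E} (hs : IsSeparable s) :
    ∃ T : E →L[ℝ] lp (fun _ : ℕ => ℝ) 2, InjOn T s := by
  have hsub : IsSeparable ((fun p : E × E => p.1 - p.2) '' s ×ˢ s) :=
    (hs.prod hs).image continuous_sub
  obtain ⟨g, hg_norm, hg_sep⟩ := hsub.exists_seq_strongDual_eq_zero_of_forall (𝕜 := ℝ)
  refine ⟨weightedStrongDualCLM ⟨_, memℓp_two_geometric_two_inv⟩ g hg_norm,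
    fun x hx y hy hxy => sub_eq_zero.1 <| hg_sep _ ⟨(x, y), ⟨hx, hy⟩, rfl⟩ fun n => ?_⟩
  have := congrArg (fun z : lp (fun _ : ℕ => ℝ) 2 => z n) hxy
  simp only [weightedStrongDualCLM_apply] at this
  rw [map_sub, sub_eq_zero]
  exact mul_left_cancel₀ (by positivity) this

theorem IsCompact.exists_uniformContinuous_retraction_of_injOn {α β : Type*} [UniformSpace α]
    [UniformSpace β] [T2Space β] {K : Set α} (hK : IsCompact K) {T : α → β}
    (hT : UniformContinuous T) (hinj : InjOn T K) {P : β → β} (hP : UniformContinuous P)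
    (hPmem : ∀ y, P y ∈ T '' K) (hPfix : ∀ y ∈ T '' K, P y = y) :
    ∃ r : α → α, UniformContinuous r ∧ range r ⊆ K ∧ ∀ x ∈ K, r x = x := by
  have : CompactSpace K := isCompact_iff_compactSpace.1 hK
  have : CompactSpace (T '' K) := isCompact_iff_compactSpace.1 (hK.image hT.continuous)
  let e : K ≃ₜ T '' K := Continuous.homeoOfEquivCompactToT2 (f := Equiv.Set.imageOfInjOn T K hinj)
    ((hT.continuous.comp continuous_subtype_val).subtype_mk fun x => mem_image_of_mem T x.2)
  have he : UniformContinuous e.symm :=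
    CompactSpace.uniformContinuous_of_continuous e.symm.continuous
  refine ⟨fun x => e.symm ⟨P (T x), hPmem _⟩, uniformContinuous_subtype_val.comp <|
    he.comp ((hP.comp hT).subtype_mk _), range_subset_iff.2 fun x => (e.symm _).2,
    fun x hx => ?_⟩
  simp only [hPfix _ (mem_image_of_mem T hx)]
  exact congrArg Subtype.val (e.symm_apply_apply ⟨x, hx⟩)

theorem compact_convex_uniform_retract_general
    {X : Type*} [NormedAddCommGroup X] [NormedSpace ℝ X]
    (K : Set X) (hne : K.Nonempty) (hK : IsCompact K) (hconv : Convex ℝ K) :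
    ∃ r : X → X, UniformContinuous r ∧ Set.range r ⊆ K ∧ ∀ x ∈ K, r x = x := by
  obtain ⟨T, hT⟩ := hK.isSeparable.exists_continuousLinearMap_lp_two_injOn
  obtain ⟨P, hP, hPmem, hPfix⟩ := exists_lipschitzWith_one_retraction_of_isComplete_of_convex
    (hne.image T) (hK.image T.continuous).isComplete (hconv.linear_image T.toLinearMap)
  exact hK.exists_uniformContinuous_retraction_of_injOn T.uniformContinuous hT
    hP.uniformContinuous hPmem hPfix

/-- Every nonempty compact convex subset of a real Banach space is a uniform retract
of the space. -/
theorem compact_convex_uniform_retract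
    {X : Type*} [NormedAddCommGroup X] [NormedSpace ℝ X] [CompleteSpace X]
    (K : Set X) (hne : K.Nonempty) (hK : IsCompact K) (hconv : Convex ℝ K) :
    ∃ r : X → X, UniformContinuous r ∧ Set.range r ⊆ K ∧ ∀ x ∈ K, r x = x :=
  compact_convex_uniform_retract_general K hne hK hconv
end

section
/- Let X be a separable real Banach space and let 0 < α < 1. Then there exists a nonempty compact convex subset K of X which generates X (the closed linear span of K equals X) and which is an α-Hölder retract of X: there exist a constant C ≥ 0 and a map r : X → X with ‖r(x) − r(y)‖ ≤ C‖x − y‖^α for all x, y ∈ X, whose range is contained in K, and with r(x) = x for every x ∈ K. -/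
/-!
A separable Banach space carries a fundamental biorthogonal system `(eₙ, fₙ)`, built by a
Gram–Schmidt procedure along a dense sequence with Hahn–Banach functionals. Rescaling the pairs
makes `∑ ‖eₙ‖` and `∑ ‖fₙ‖ ^ α * ‖eₙ‖` finite; this is where `α < 1` enters. The image
`K = {∑ tₙ • eₙ | t ∈ [0,1]^ℕ}` of the Hilbert cube is then compact, convex and contains every
`eₙ`, and `r x = ∑ projIcc 0 1 (fₙ x) • eₙ` fixes `K` by biorthogonality. Clamping to `[0,1]` is
`1`-Lipschitz and bounded by `1`, so the `n`-th term of `r x - r y` has norm at most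
`min 1 (‖fₙ‖ * ‖x - y‖) * ‖eₙ‖ ≤ ‖fₙ‖ ^ α * ‖eₙ‖ * ‖x - y‖ ^ α`.
-/
section

open Set Submodule Filter Topology

variable {X : Type*} [NormedAddCommGroup X] [NormedSpace ℝ X]

theorem exists_dual_eq_one_of_notMem_span {s : Set X} (hs : s.Finite) {w : X}
    (hw : w ∉ span ℝ s) : ∃ f : StrongDual ℝ X, f w = 1 ∧ ∀ x ∈ s, f x = 0 := by
  set E := span ℝ s
  have := FiniteDimensional.span_of_finite ℝ hs
  have : IsClosed (E : Set X) := E.closed_of_finiteDimensional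
  obtain ⟨g, hg⟩ := SeparatingDual.exists_eq_one (R := ℝ) (x := E.mkQ w)
    ((Submodule.Quotient.mk_eq_zero E).not.mpr hw)
  refine ⟨g.comp E.mkQL, hg, fun x hx => ?_⟩
  simp [(Submodule.Quotient.mk_eq_zero E).mpr (subset_span hx)]

/-- Only nonzero `e i` are constrained, so that zero pairs can pad the system when `X` is
finite-dimensional. -/
def IsBiorthogonal {ι : Type*} [DecidableEq ι] (e : ι → X) (f : ι → StrongDual ℝ X) : Prop :=
  ∀ i, e i ≠ 0 → ∀ j, f i (e j) = if j = i then 1 else 0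

section Step

variable {ι : Type*} [Fintype ι] (e : ι → X) (f : ι → StrongDual ℝ X) (v : X)

open Classical in
noncomputable def biorthStep : X × StrongDual ℝ X :=
  if h : v - ∑ i, f i v • e i ∈ span ℝ (range e) then (0, 0)
  else
    (v - ∑ i, f i v • e i, Classical.choose (exists_dual_eq_one_of_notMem_span (finite_range e) h))

theorem biorthStep_snd_apply (i : ι) : (biorthStep e f v).2 (e i) = 0 := by
  unfold biorthStep
  split_ifs with h
  · rfl
  · exact (Classical.choose_spec (exists_dual_eq_one_of_notMem_span (finite_range e) h)).2 _
      ⟨i, rfl⟩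

theorem biorthStep_snd_fst (h : (biorthStep e f v).1 ≠ 0) :
    (biorthStep e f v).2 (biorthStep e f v).1 = 1 := by
  unfold biorthStep at h ⊢
  split_ifs with hw
  · simp [hw] at h
  · exact (Classical.choose_spec (exists_dual_eq_one_of_notMem_span (finite_range e) hw)).1

theorem sub_biorthStep_fst_mem_span : v - (biorthStep e f v).1 ∈ span ℝ (range e) := by
  have hsum : ∑ i, f i v • e i ∈ span ℝ (range e) :=
    sum_mem fun i _ => smul_mem _ _ (subset_span ⟨i, rfl⟩)
  unfold biorthStep
  split_ifs with hw
  · simpa using (sub_mem_iff_left _ hsum).mp hw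
  · simpa using hsum

theorem IsBiorthogonal.apply_biorthStep_fst [DecidableEq ι] (hb : IsBiorthogonal e f) {i : ι}
    (hi : e i ≠ 0) : f i (biorthStep e f v).1 = 0 := by
  unfold biorthStep
  split_ifs
  · exact map_zero _
  · simp [hb i hi]

end Step

noncomputable def biorthSeq (u : ℕ → X) (n : ℕ) : X × StrongDual ℝ X :=
  biorthStep (fun i : Fin n => (biorthSeq u i).1) (fun i : Fin n => (biorthSeq u i).2) (u n)

section BiorthSeq

variable (u : ℕ → X)

theorem isBiorthogonal_biorthSeq_fin (n : ℕ) :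
    IsBiorthogonal (fun i : Fin n => (biorthSeq u i).1) (fun i : Fin n => (biorthSeq u i).2) := by
  induction n with
  | zero => exact fun i => i.elim0
  | succ n ih =>
    intro i hi j
    induction i using Fin.lastCases with
    | last =>
      induction j using Fin.lastCases with
      | last =>
        simp only [Fin.val_last, if_true] at hi ⊢
        rw [biorthSeq.eq_1 u n] at hi ⊢
        exact biorthStep_snd_fst _ _ _ hi
      | cast j =>
        simp only [Fin.val_last, Fin.val_castSucc, if_neg (Fin.castSucc_lt_last j).ne]
        rw [biorthSeq.eq_1 u n]
        exact biorthStep_snd_apply _ _ _ j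
    | cast i =>
      induction j using Fin.lastCases with
      | last =>
        simp only [Fin.val_last, Fin.val_castSucc, if_neg (Fin.castSucc_lt_last i).ne']
        rw [biorthSeq.eq_1 u n]
        exact ih.apply_biorthStep_fst _ _ _ hi
      | cast j => simpa using ih i hi j

theorem isBiorthogonal_biorthSeq :
    IsBiorthogonal (fun n => (biorthSeq u n).1) (fun n => (biorthSeq u n).2) := by
  intro i hi j
  have := isBiorthogonal_biorthSeq_fin u (max i j + 1) ⟨i, by omega⟩ hi ⟨j, by omega⟩
  simpa [Fin.ext_iff] using this

theorem mem_span_range_biorthSeq (n : ℕ) : u n ∈ span ℝ (range fun n => (biorthSeq u n).1) := by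
  have hsub := sub_biorthStep_fst_mem_span (fun i : Fin n => (biorthSeq u i).1)
    (fun i : Fin n => (biorthSeq u i).2) (u n)
  rw [← biorthSeq.eq_1] at hsub
  rw [← sub_add_cancel (u n) (biorthSeq u n).1]
  exact add_mem (span_mono (range_subset_iff.mpr fun i : Fin n => mem_range_self (i : ℕ)) hsub)
    (subset_span ⟨n, rfl⟩)

end BiorthSeq

theorem exists_pos_mul_lt_and_rpow_mul_lt {β : ℝ} (hβ : 0 < β) (a b : ℝ) {ε : ℝ} (hε : 0 < ε) :
    ∃ c > 0, c * a < ε ∧ c ^ β * b < ε := by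
  have ha : Tendsto (fun c : ℝ => c * a) (𝓝[>] 0) (𝓝 0) := by
    simpa using ((tendsto_id (x := 𝓝 (0 : ℝ))).mul_const a).mono_left nhdsWithin_le_nhds
  have hb : Tendsto (fun c : ℝ => c ^ β * b) (𝓝[>] 0) (𝓝 0) := by
    have := ((Real.continuousAt_rpow_const 0 β (Or.inr hβ.le)).tendsto.mul_const b).mono_left
      (nhdsWithin_le_nhds (s := Ioi 0))
    simpa [Real.zero_rpow hβ.ne'] using this
  exact (eventually_mem_nhdsWithin.and ((ha.eventually (gt_mem_nhds hε)).and
    (hb.eventually (gt_mem_nhds hε)))).exists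

theorem IsBiorthogonal.smul {ι : Type*} [DecidableEq ι] {e : ι → X} {f : ι → StrongDual ℝ X}
    (hb : IsBiorthogonal e f) {c : ι → ℝ} (hc : ∀ i, c i ≠ 0) :
    IsBiorthogonal (fun i => c i • e i) (fun i => (c i)⁻¹ • f i) := by
  intro i hi j
  have hei : e i ≠ 0 := right_ne_zero_of_smul hi
  split_ifs with hji
  · subst hji; simp [hb j hei, hc j]
  · simp [hb i hei, hji]

theorem exists_isBiorthogonal_summable [TopologicalSpace.SeparableSpace X] {α : ℝ} (hα : α < 1) :
    ∃ (e : ℕ → X) (f : ℕ → StrongDual ℝ X), IsBiorthogonal e f ∧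
      Dense (span ℝ (range e) : Set X) ∧ Summable (fun n => ‖e n‖) ∧
      Summable (fun n => ‖f n‖ ^ α * ‖e n‖) := by
  obtain ⟨u, hu⟩ := TopologicalSpace.exists_dense_seq X
  set e := fun n => (biorthSeq u n).1
  set f := fun n => (biorthSeq u n).2
  choose c hc₀ hce hcf using fun n => exists_pos_mul_lt_and_rpow_mul_lt (sub_pos.mpr hα)
    ‖e n‖ (‖f n‖ ^ α * ‖e n‖) (pow_pos (one_half_pos (α := ℝ)) n)
  refine ⟨fun n => c n • e n, fun n => (c n)⁻¹ • f n,
    (isBiorthogonal_biorthSeq u).smul fun n => (hc₀ n).ne', ?_, ?_, ?_⟩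
  · have he : range e ⊆ span ℝ (range fun n => c n • e n) := by
      rintro _ ⟨n, rfl⟩
      rw [← inv_smul_smul₀ (hc₀ n).ne' (e n)]
      exact smul_mem _ _ (subset_span ⟨n, rfl⟩)
    refine hu.mono (range_subset_iff.mpr fun n => ?_)
    exact span_le.mpr he (mem_span_range_biorthSeq u n)
  · refine summable_geometric_two.of_nonneg_of_le (fun n => norm_nonneg _) fun n => ?_
    rw [norm_smul, Real.norm_of_nonneg (hc₀ n).le]
    exact (hce n).le
  · refine summable_geometric_two.of_nonneg_of_le (fun n => by positivity) fun n => ?_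
    have hc := hc₀ n
    calc ‖(c n)⁻¹ • f n‖ ^ α * ‖c n • e n‖ = c n ^ (1 - α) * (‖f n‖ ^ α * ‖e n‖) := by
          rw [norm_smul, norm_smul, norm_inv, Real.norm_of_nonneg hc.le,
            Real.mul_rpow (inv_nonneg.mpr hc.le) (norm_nonneg _), Real.inv_rpow hc.le,
            Real.rpow_sub hc, Real.rpow_one]
          ring
      _ ≤ (1 / 2) ^ n := (hcf n).le

theorem abs_projIcc_sub_projIcc_le_rpow {α : ℝ} (hα₀ : 0 ≤ α) (hα₁ : α ≤ 1) (a b : ℝ) :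
    |(projIcc 0 1 zero_le_one a : ℝ) - projIcc 0 1 zero_le_one b| ≤ |a - b| ^ α := by
  have hlip := abs_projIcc_sub_projIcc (h := zero_le_one (α := ℝ)) (c := a) (d := b)
  rcases le_total |a - b| 1 with h | h
  · calc _ ≤ |a - b| := hlip
      _ = |a - b| ^ (1 : ℝ) := (Real.rpow_one _).symm
      _ ≤ |a - b| ^ α := Real.rpow_le_rpow_of_exponent_ge' (abs_nonneg _) h hα₀ hα₁
  · calc _ ≤ (1 : ℝ) := by
          obtain ⟨ha₀, ha₁⟩ := (projIcc 0 1 zero_le_one a).2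
          obtain ⟨hb₀, hb₁⟩ := (projIcc 0 1 zero_le_one b).2
          rw [abs_sub_le_iff]; constructor <;> linarith
      _ ≤ |a - b| ^ α := Real.one_le_rpow h hα₀

theorem norm_unitInterval_smul_le (t : unitInterval) (x : X) : ‖(t : ℝ) • x‖ ≤ ‖x‖ := by
  rw [norm_smul, Real.norm_of_nonneg t.2.1]
  exact mul_le_of_le_one_left (norm_nonneg _) t.2.2

section Cube

variable {e : ℕ → X}

noncomputable def cubeSum (e : ℕ → X) (t : ℕ → unitInterval) : X := ∑' n, (t n : ℝ) • e n

noncomputable def cubeRetraction (e : ℕ → X) (f : ℕ → StrongDual ℝ X) (x : X) : X :=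
  cubeSum e fun n => projIcc 0 1 zero_le_one (f n x)

theorem range_subset_range_cubeSum (e : ℕ → X) : range e ⊆ range (cubeSum e) := by
  rintro _ ⟨n, rfl⟩
  refine ⟨Pi.single n 1, ?_⟩
  rw [cubeSum, tsum_eq_single n fun k hk => by simp [hk]]
  simp

variable [CompleteSpace X]

theorem summable_unitInterval_smul (he : Summable fun n => ‖e n‖) (t : ℕ → unitInterval) :
    Summable fun n => (t n : ℝ) • e n :=
  he.of_norm_bounded fun _ => norm_unitInterval_smul_le _ _

theorem continuous_cubeSum (he : Summable fun n => ‖e n‖) : Continuous (cubeSum e) :=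
  continuous_tsum
    (fun n => (continuous_subtype_val.comp (continuous_apply n)).smul continuous_const) he
    fun _ _ => norm_unitInterval_smul_le _ _

theorem convex_range_cubeSum (he : Summable fun n => ‖e n‖) : Convex ℝ (range (cubeSum e)) := by
  rintro _ ⟨t, rfl⟩ _ ⟨s, rfl⟩ a b ha hb hab
  refine ⟨fun n => ⟨a * t n + b * s n, convex_Icc 0 1 (t n).2 (s n).2 ha hb hab⟩, ?_⟩
  simp only [cubeSum, add_smul, mul_smul]
  rw [Summable.tsum_add ((summable_unitInterval_smul he t).const_smul a)
      ((summable_unitInterval_smul he s).const_smul b),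
    Summable.tsum_const_smul a (summable_unitInterval_smul he t),
    Summable.tsum_const_smul b (summable_unitInterval_smul he s)]

theorem IsBiorthogonal.apply_cubeSum {f : ℕ → StrongDual ℝ X} (hb : IsBiorthogonal e f)
    (he : Summable fun n => ‖e n‖) (t : ℕ → unitInterval) {n : ℕ} (hn : e n ≠ 0) :
    f n (cubeSum e t) = t n := by
  rw [cubeSum, (f n).map_tsum (summable_unitInterval_smul he t)]
  simp [hb n hn]

theorem IsBiorthogonal.cubeRetraction_cubeSum {f : ℕ → StrongDual ℝ X} (hb : IsBiorthogonal e f)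
    (he : Summable fun n => ‖e n‖) (t : ℕ → unitInterval) :
    cubeRetraction e f (cubeSum e t) = cubeSum e t := by
  refine tsum_congr fun n => ?_
  rcases eq_or_ne (e n) 0 with hn | hn
  · simp [hn]
  · dsimp only
    rw [hb.apply_cubeSum he t hn, projIcc_val]

theorem norm_cubeRetraction_sub_le (he : Summable fun n => ‖e n‖) {f : ℕ → StrongDual ℝ X}
    {α : ℝ} (hα₀ : 0 ≤ α) (hα₁ : α ≤ 1) (hfe : Summable fun n => ‖f n‖ ^ α * ‖e n‖) (x y : X) :
    ‖cubeRetraction e f x - cubeRetraction e f y‖ ≤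
      (∑' n, ‖f n‖ ^ α * ‖e n‖) * ‖x - y‖ ^ α := by
  rw [cubeRetraction, cubeRetraction, cubeSum, cubeSum,
    ← (summable_unitInterval_smul he _).tsum_sub (summable_unitInterval_smul he _)]
  refine tsum_of_norm_bounded (hfe.hasSum.mul_right _) fun n => ?_
  rw [← sub_smul, norm_smul, Real.norm_eq_abs]
  calc _ ≤ |f n x - f n y| ^ α * ‖e n‖ :=
        mul_le_mul_of_nonneg_right (abs_projIcc_sub_projIcc_le_rpow hα₀ hα₁ _ _) (norm_nonneg _)
    _ ≤ (‖f n‖ * ‖x - y‖) ^ α * ‖e n‖ := by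
        gcongr
        rw [← map_sub]
        exact (f n).le_opNorm _
    _ = ‖f n‖ ^ α * ‖e n‖ * ‖x - y‖ ^ α := by
        rw [Real.mul_rpow (norm_nonneg _) (norm_nonneg _)]
        ring

end Cube

end

/-- In every separable real Banach space `X` and for every `0 < α < 1`, there is a
compact convex generating subset of `X` which is an `α`-Hölder retract of `X`. -/
theorem exists_generating_compact_convex_holder_retract
    {X : Type*} [NormedAddCommGroup X] [NormedSpace ℝ X] [CompleteSpace X]
    [TopologicalSpace.SeparableSpace X] (α : ℝ) (hα₀ : 0 < α) (hα₁ : α < 1) :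
    ∃ K : Set X, K.Nonempty ∧ IsCompact K ∧ Convex ℝ K ∧
      (Submodule.span ℝ K).topologicalClosure = ⊤ ∧
      ∃ (C : ℝ) (r : X → X), 0 ≤ C ∧
        (∀ x y : X, ‖r x - r y‖ ≤ C * ‖x - y‖ ^ α) ∧
        Set.range r ⊆ K ∧ ∀ x ∈ K, r x = x := by
  obtain ⟨e, f, hb, hdense, he, hfe⟩ := exists_isBiorthogonal_summable (X := X) hα₁
  refine ⟨Set.range (cubeSum e), Set.range_nonempty _, isCompact_range (continuous_cubeSum he),
    convex_range_cubeSum he, ?_, ∑' n, ‖f n‖ ^ α * ‖e n‖, cubeRetraction e f,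
    tsum_nonneg fun _ => by positivity, norm_cubeRetraction_sub_le he hα₀.le hα₁.le hfe,
    ?_, ?_⟩
  · exact Submodule.dense_iff_topologicalClosure_eq_top.mp
      (hdense.mono (Submodule.span_mono (range_subset_range_cubeSum e)))
  · rintro _ ⟨x, rfl⟩
    exact ⟨_, rfl⟩
  · rintro _ ⟨t, rfl⟩
    exact hb.cubeRetraction_cubeSum he t
end

section
/- Let X be a real Banach space and Y a closed linear subspace of X which is a Lipschitz retract of X (there are a constant K and a K-Lipschitz map r : X → X with range contained in Y and r(y) = y for all y ∈ Y). Then there exists a bounded linear extension operator G : Y* → X* between the continuous dual spaces: G is a continuous linear map such that (G g)(y) = g(y) for every continuous linear functional g on Y and every y ∈ Y. -/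
/-!
Lindenstrauss' averaging argument. Every abelian group `G` carries an invariant mean on its
bounded real functions: take a Hahn–Banach functional dominated by Dixmier's functional
`f ↦ inf_s sup_u 𝔼 i, f (u + s i)`, which is sublinear and is `≤ 0` on the increments
`f (· + a) - f` because their averages along `0, a, …, n • a` telescope.

For a `K`-Lipschitz retraction `ρ : X → Y` and `g ∈ Y*`, averaging `y ↦ g (ρ (v + y) - y)` over
`Y` gives a `‖g‖ K`-Lipschitz function `T g` on `X` with `T g (v + y) = T g v + g y`. Averaging
its increments `u ↦ T g (x + u) - T g u` over `X` gives an additive, hence linear, functional of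
norm `≤ K ‖g‖` which still agrees with `g` on `Y`. Both averages are linear in `g`.
-/

open Set Filter Topology
open scoped BigOperators

def boundedFunctions (G : Type*) : Submodule ℝ (G → ℝ) where
  carrier := {f | ∃ C, ∀ x, |f x| ≤ C}
  add_mem' := by
    rintro f g ⟨C, hC⟩ ⟨D, hD⟩
    exact ⟨C + D, fun x => (abs_add_le _ _).trans (add_le_add (hC x) (hD x))⟩
  zero_mem' := ⟨0, by simp⟩
  smul_mem' := by
    rintro c f ⟨C, hC⟩
    exact ⟨|c| * C, fun x => by
      simpa only [Pi.smul_apply, smul_eq_mul, abs_mul] using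
        mul_le_mul_of_nonneg_left (hC x) (abs_nonneg c)⟩

namespace boundedFunctions

variable {G : Type*} {f : G → ℝ}

lemma bddAbove_range (hf : f ∈ boundedFunctions G) : BddAbove (range f) := by
  obtain ⟨C, hC⟩ := hf
  exact ⟨C, by rintro _ ⟨x, rfl⟩; exact (abs_le.1 (hC x)).2⟩

lemma const_mem (c : ℝ) : (fun _ => c) ∈ boundedFunctions G := ⟨|c|, fun _ => le_rfl⟩

lemma comp_add_right_mem [Add G] (hf : f ∈ boundedFunctions G) (a : G) :
    (fun x => f (x + a)) ∈ boundedFunctions G := by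
  obtain ⟨C, hC⟩ := hf
  exact ⟨C, fun x => hC (x + a)⟩

end boundedFunctions

section SupAverage

variable {G ι κ : Type*} [AddCommGroup G] [Fintype ι] [Fintype κ] {f g : G → ℝ}

noncomputable def supAverage (f : G → ℝ) (s : ι → G) : ℝ :=
  ⨆ u, 𝔼 i, f (u + s i)

lemma supAverage_comp_equiv (e : κ ≃ ι) (f : G → ℝ) (s : ι → G) :
    supAverage f (s ∘ e) = supAverage f s := by
  unfold supAverage
  congr! 2 with u
  exact Fintype.expect_equiv e _ _ fun _ => rfl

lemma supAverage_smul {c : ℝ} (hc : 0 ≤ c) (f : G → ℝ) (s : ι → G) :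
    supAverage (c • f) s = c * supAverage f s := by
  simp only [supAverage, Real.mul_iSup_of_nonneg hc, Finset.mul_expect, Pi.smul_apply,
    smul_eq_mul]

variable [Nonempty ι] [Nonempty κ]

lemma supAverage_le {C : ℝ} (h : ∀ x, f x ≤ C) (s : ι → G) : supAverage f s ≤ C :=
  ciSup_le fun _ => Finset.expect_le Finset.univ_nonempty fun _ _ => h _

lemma expect_le_supAverage (hf : BddAbove (range f)) (s : ι → G) (u : G) :
    𝔼 i, f (u + s i) ≤ supAverage f s := by
  obtain ⟨C, hC⟩ := hf
  refine le_ciSup (f := fun u => 𝔼 i, f (u + s i)) ⟨C, ?_⟩ u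
  rintro _ ⟨v, rfl⟩
  exact Finset.expect_le Finset.univ_nonempty fun _ _ => hC ⟨_, rfl⟩

lemma le_supAverage {C : ℝ} (hf : BddAbove (range f)) (h : ∀ x, C ≤ f x) (s : ι → G) :
    C ≤ supAverage f s :=
  (Finset.le_expect Finset.univ_nonempty fun _ _ => h _).trans (expect_le_supAverage hf s 0)

lemma supAverage_add_le (hf : BddAbove (range f)) (hg : BddAbove (range g)) (s : ι → G) :
    supAverage (f + g) s ≤ supAverage f s + supAverage g s :=
  ciSup_le fun u => by
    simp only [Pi.add_apply, Finset.expect_add_distrib]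
    exact add_le_add (expect_le_supAverage hf s u) (expect_le_supAverage hg s u)

lemma supAverage_add_family_le_right (hf : BddAbove (range f)) (s : ι → G) (t : κ → G) :
    supAverage f (fun p : ι × κ => s p.1 + t p.2) ≤ supAverage f t :=
  ciSup_le fun u => by
    rw [← Finset.univ_product_univ, Finset.expect_product]
    refine Finset.expect_le Finset.univ_nonempty fun i _ => ?_
    simpa only [add_assoc] using expect_le_supAverage hf t (u + s i)

lemma supAverage_add_family_le_left (hf : BddAbove (range f)) (s : ι → G) (t : κ → G) :
    supAverage f (fun p : ι × κ => s p.1 + t p.2) ≤ supAverage f s := by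
  rw [← supAverage_comp_equiv (Equiv.prodComm ι κ).symm]
  simpa only [Function.comp_def, Equiv.prodComm_symm, Equiv.prodComm_apply, Prod.fst_swap,
    Prod.snd_swap, add_comm] using supAverage_add_family_le_right hf t s

end SupAverage

section Dixmier

variable {G ι : Type*} [AddCommGroup G] {f g : G → ℝ}

/-- Families are indexed by `Fin (n + 1)` because the empty family has `supAverage f s = 0`. -/
noncomputable def dixmierFunctional (f : G → ℝ) : ℝ :=
  ⨅ s : Σ n : ℕ, Fin (n + 1) → G, supAverage f s.2

lemma dixmierFunctional_le_supAverage [Fintype ι] [Nonempty ι] (hf : f ∈ boundedFunctions G)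
    (s : ι → G) : dixmierFunctional f ≤ supAverage f s := by
  obtain ⟨C, hC⟩ := hf
  have hbdd : BddBelow (range fun s : Σ n : ℕ, Fin (n + 1) → G => supAverage f s.2) := by
    refine ⟨-C, ?_⟩
    rintro _ ⟨s, rfl⟩
    exact le_supAverage (boundedFunctions.bddAbove_range ⟨C, hC⟩)
      (fun x => neg_le_of_abs_le (hC x)) s.2
  obtain ⟨n, hn⟩ := Nat.exists_eq_succ_of_ne_zero (Fintype.card_ne_zero (α := ι))
  rw [← supAverage_comp_equiv ((Fintype.equivFin ι).trans (finCongr hn)).symm]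
  exact ciInf_le hbdd ⟨n, _⟩

lemma dixmierFunctional_le {C : ℝ} (hf : f ∈ boundedFunctions G) (h : ∀ x, f x ≤ C) :
    dixmierFunctional f ≤ C :=
  (dixmierFunctional_le_supAverage hf fun _ : Unit => 0).trans (supAverage_le h _)

lemma le_dixmierFunctional {C : ℝ} (hf : f ∈ boundedFunctions G) (h : ∀ x, C ≤ f x) :
    C ≤ dixmierFunctional f :=
  le_ciInf fun s => le_supAverage (boundedFunctions.bddAbove_range hf) h s.2

lemma dixmierFunctional_add_le (hf : f ∈ boundedFunctions G) (hg : g ∈ boundedFunctions G) :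
    dixmierFunctional (f + g) ≤ dixmierFunctional f + dixmierFunctional g :=
  le_ciInf_add_ciInf fun s t => by
    have hf' := boundedFunctions.bddAbove_range hf
    have hg' := boundedFunctions.bddAbove_range hg
    calc dixmierFunctional (f + g)
        ≤ supAverage (f + g) fun p : Fin (s.1 + 1) × Fin (t.1 + 1) => s.2 p.1 + t.2 p.2 :=
          dixmierFunctional_le_supAverage (add_mem hf hg) _
      _ ≤ supAverage f (fun p : Fin (s.1 + 1) × Fin (t.1 + 1) => s.2 p.1 + t.2 p.2) +
          supAverage g (fun p : Fin (s.1 + 1) × Fin (t.1 + 1) => s.2 p.1 + t.2 p.2) :=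
          supAverage_add_le hf' hg' _
      _ ≤ supAverage f s.2 + supAverage g t.2 :=
          add_le_add (supAverage_add_family_le_left hf' _ _)
            (supAverage_add_family_le_right hg' _ _)

lemma dixmierFunctional_smul {c : ℝ} (hc : 0 ≤ c) (f : G → ℝ) :
    dixmierFunctional (c • f) = c * dixmierFunctional f := by
  simp only [dixmierFunctional, Real.mul_iInf_of_nonneg hc, supAverage_smul hc]

/-- Averaging the increments of `f` along `0, a, …, n • a` telescopes to
`(f (u + (n + 1) • a) - f u) / (n + 1)`. -/
lemma dixmierFunctional_sub_comp_add_le (hf : f ∈ boundedFunctions G) (a : G) :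
    dixmierFunctional (fun x => f (x + a) - f x) ≤ 0 := by
  have hinc : (fun x => f (x + a) - f x) ∈ boundedFunctions G :=
    sub_mem (boundedFunctions.comp_add_right_mem hf a) hf
  obtain ⟨C, hC⟩ := hf
  have hbound :
      ∀ n : ℕ, dixmierFunctional (fun x => f (x + a) - f x) ≤ 2 * C * (1 / (n + 1)) := by
    intro n
    refine (dixmierFunctional_le_supAverage hinc fun i : Fin (n + 1) => (i : ℕ) • a).trans
      (ciSup_le fun u => ?_)
    have htel : ∑ i : Fin (n + 1), (f (u + (i : ℕ) • a + a) - f (u + (i : ℕ) • a))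
        = f (u + (n + 1) • a) - f (u + 0 • a) := by
      rw [Fin.sum_univ_eq_sum_range (fun i => f (u + i • a + a) - f (u + i • a)),
        ← Finset.sum_range_sub (fun i => f (u + i • a))]
      simp only [succ_nsmul, add_assoc]
    rw [Fintype.expect_eq_sum_div_card]
    simp only [htel, Fintype.card_fin, Nat.cast_add, Nat.cast_one, mul_one_div]
    gcongr
    linarith [abs_le.1 (hC (u + (n + 1) • a)), abs_le.1 (hC (u + 0 • a))]
  have hlim : Tendsto (fun n : ℕ => 2 * C * (1 / ((n : ℝ) + 1))) atTop (𝓝 (2 * C * 0)) :=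
    tendsto_one_div_add_atTop_nhds_zero_nat.const_mul _
  simpa using ge_of_tendsto' hlim hbound

end Dixmier

section InvariantMean

variable {G : Type*} [AddCommGroup G]

/-- Only the values on bounded functions are constrained; asking `M` to be linear on all of
`G → ℝ` spares the boundedness side conditions when its linearity is used. -/
structure IsAddInvariantMean (M : (G → ℝ) →ₗ[ℝ] ℝ) : Prop where
  map_one : M 1 = 1
  nonneg : ∀ f ∈ boundedFunctions G, 0 ≤ f → 0 ≤ M f
  map_comp_add_right : ∀ f ∈ boundedFunctions G, ∀ a, M (fun x => f (x + a)) = M f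

variable (G) in
lemma exists_linearMap_le_dixmierFunctional :
    ∃ M : (G → ℝ) →ₗ[ℝ] ℝ, ∀ f ∈ boundedFunctions G, M f ≤ dixmierFunctional f := by
  obtain ⟨m, -, hm⟩ := exists_extension_of_le_sublinear
    (⟨⊥, 0⟩ : boundedFunctions G →ₗ.[ℝ] ℝ) (fun f => dixmierFunctional (f : G → ℝ))
    (fun c hc f => by
      simp only [Submodule.coe_smul]
      exact dixmierFunctional_smul hc.le _)
    (fun f g => by
      simp only [Submodule.coe_add]
      exact dixmierFunctional_add_le f.2 g.2)
    (fun f => by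
      rw [(Submodule.mem_bot ℝ).1 f.2]
      exact le_dixmierFunctional (zero_mem _) fun _ => le_rfl)
  obtain ⟨M, hM⟩ := LinearMap.exists_extend m
  exact ⟨M, fun f hf => (LinearMap.congr_fun hM ⟨f, hf⟩).trans_le (hm ⟨f, hf⟩)⟩

variable (G) in
theorem exists_isAddInvariantMean :
    ∃ M : (G → ℝ) →ₗ[ℝ] ℝ, IsAddInvariantMean M := by
  obtain ⟨M, hM⟩ := exists_linearMap_le_dixmierFunctional G
  have hone : (1 : G → ℝ) ∈ boundedFunctions G := boundedFunctions.const_mem 1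
  refine ⟨M, ⟨le_antisymm ?_ ?_, fun f hf hf0 => ?_, fun f hf a => ?_⟩⟩
  · exact (hM 1 hone).trans (dixmierFunctional_le hone fun _ => le_rfl)
  · have := (hM (-1) (neg_mem hone)).trans
      (dixmierFunctional_le (C := -1) (neg_mem hone) fun _ => le_rfl)
    rw [map_neg] at this
    linarith
  · have := (hM (-f) (neg_mem hf)).trans
      (dixmierFunctional_le (neg_mem hf) fun x => neg_nonpos.2 (hf0 x))
    rw [map_neg] at this
    linarith
  · have hdecr : ∀ φ ∈ boundedFunctions G, M (fun x => φ (x + a)) - M φ ≤ 0 := fun φ hφ => by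
      rw [← map_sub]
      have hinc := sub_mem (boundedFunctions.comp_add_right_mem hφ a) hφ
      exact (hM _ hinc).trans (dixmierFunctional_sub_comp_add_le hφ a)
    have := hdecr (-f) (neg_mem hf)
    rw [show (fun x => (-f) (x + a)) = -fun x => f (x + a) from rfl, map_neg, map_neg] at this
    linarith [hdecr f hf]

namespace IsAddInvariantMean

variable {M : (G → ℝ) →ₗ[ℝ] ℝ} (hM : IsAddInvariantMean M)
include hM

lemma map_const (c : ℝ) : M (fun _ => c) = c := by
  rw [show (fun _ : G => c) = c • (1 : G → ℝ) by ext; simp, map_smul, hM.map_one, smul_eq_mul,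
    mul_one]

lemma abs_map_le {f : G → ℝ} {C : ℝ} (h : ∀ x, |f x| ≤ C) : |M f| ≤ C := by
  have hf : f ∈ boundedFunctions G := ⟨C, h⟩
  have hC := boundedFunctions.const_mem (G := G) C
  have hle := hM.nonneg _ (sub_mem hC hf) fun x => sub_nonneg.2 (abs_le.1 (h x)).2
  have hge := hM.nonneg _ (add_mem hC hf) fun x =>
    neg_le_iff_add_nonneg.1 (neg_le.1 (abs_le.1 (h x)).1)
  rw [map_sub, hM.map_const] at hle
  rw [map_add, hM.map_const] at hge
  exact abs_le.2 ⟨by linarith, by linarith⟩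

end IsAddInvariantMean

end InvariantMean

section Linearize

def linearize {E : Type*} [AddCommGroup E] (M : (E → ℝ) →ₗ[ℝ] ℝ) :
    (E → ℝ) →ₗ[ℝ] (E → ℝ) where
  toFun f x := M fun u => f (x + u) - f u
  map_add' f g := by
    ext x
    rw [Pi.add_apply, ← map_add]
    congr 1
    ext u
    simp only [Pi.add_apply]
    ring
  map_smul' c f := by
    ext x
    rw [RingHom.id_apply, Pi.smul_apply, ← map_smul]
    congr 1
    ext u
    simp only [Pi.smul_apply, smul_eq_mul]
    ring

lemma linearize_apply {E : Type*} [AddCommGroup E] (M : (E → ℝ) →ₗ[ℝ] ℝ) (f : E → ℝ) (x : E) :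
    linearize M f x = M fun u => f (x + u) - f u :=
  rfl

variable {E : Type*} {M : (E → ℝ) →ₗ[ℝ] ℝ} {f : E → ℝ}

lemma IsAddInvariantMean.linearize_apply_of_add_eq [AddCommGroup E] (hM : IsAddInvariantMean M)
    {a : E} {c : ℝ} (h : ∀ u, f (u + a) = f u + c) : linearize M f a = c := by
  rw [linearize_apply, ← hM.map_const c]
  congr 1
  ext u
  rw [add_comm, h]
  ring

variable [NormedAddCommGroup E] {L : NNReal}

lemma LipschitzWith.abs_apply_add_sub_le (hf : LipschitzWith L f) (x u : E) :
    |f (x + u) - f u| ≤ L * ‖x‖ := by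
  simpa [Real.dist_eq, dist_eq_norm] using hf.dist_le_mul (x + u) u

namespace IsAddInvariantMean

variable (hM : IsAddInvariantMean M)
include hM

lemma abs_linearize_le (hf : LipschitzWith L f) (x : E) : |linearize M f x| ≤ L * ‖x‖ :=
  hM.abs_map_le (hf.abs_apply_add_sub_le x)

lemma linearize_add (hf : LipschitzWith L f) (x y : E) :
    linearize M f (x + y) = linearize M f x + linearize M f y := by
  have hx : (fun u => f (x + u) - f u) ∈ boundedFunctions E := ⟨_, hf.abs_apply_add_sub_le x⟩
  have hsplit : (fun u => f (x + y + u) - f u)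
      = (fun u => f (x + (u + y)) - f (u + y)) + fun u => f (y + u) - f u := by
    ext u
    simp only [Pi.add_apply, add_comm u y, add_assoc]
    ring
  rw [linearize_apply, hsplit, map_add, hM.map_comp_add_right _ hx]
  rfl

variable [NormedSpace ℝ E]

noncomputable def linearizeCLM (hf : LipschitzWith L f) : E →L[ℝ] ℝ :=
  (AddMonoidHom.mk' (linearize M f) (hM.linearize_add hf)).toRealLinearMap
    (AddMonoidHomClass.continuous_of_bound _ L fun x => hM.abs_linearize_le hf x)

lemma linearizeCLM_apply (hf : LipschitzWith L f) (x : E) :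
    hM.linearizeCLM hf x = linearize M f x :=
  rfl

lemma norm_linearizeCLM_le (hf : LipschitzWith L f) : ‖hM.linearizeCLM hf‖ ≤ L :=
  ContinuousLinearMap.opNorm_le_bound _ L.2 fun x => hM.abs_linearize_le hf x

end IsAddInvariantMean

end Linearize

section EquivariantExtension

variable {X : Type*} [NormedAddCommGroup X] [NormedSpace ℝ X] {Y : Submodule ℝ X}

def equivariantExtension (M : (Y → ℝ) →ₗ[ℝ] ℝ) (ρ : X → Y) :
    (Y →L[ℝ] ℝ) →ₗ[ℝ] (X → ℝ) where
  toFun g v := M fun y => g (ρ (v + y) - y)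
  map_add' g h := by
    ext v
    rw [Pi.add_apply, ← map_add]
    rfl
  map_smul' c g := by
    ext v
    rw [RingHom.id_apply, Pi.smul_apply, ← map_smul]
    rfl

lemma equivariantExtension_apply (M : (Y → ℝ) →ₗ[ℝ] ℝ) (ρ : X → Y) (g : Y →L[ℝ] ℝ) (v : X) :
    equivariantExtension M ρ g v = M fun y => g (ρ (v + y) - y) :=
  rfl

variable {M : (Y → ℝ) →ₗ[ℝ] ℝ} {ρ : X → Y} {K : NNReal}

lemma LipschitzWith.abs_apply_sub_sub_le (hρ : LipschitzWith K ρ) (g : Y →L[ℝ] ℝ) (v w : X)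
    (y : Y) : |g (ρ (v + y) - y) - g (ρ (w + y) - y)| ≤ ‖g‖ * K * ‖v - w‖ := by
  rw [← map_sub, sub_sub_sub_cancel_right, ← Real.norm_eq_abs, mul_assoc]
  refine (g.le_opNorm _).trans (mul_le_mul_of_nonneg_left ?_ (norm_nonneg g))
  simpa [dist_eq_norm] using hρ.dist_le_mul (v + y) (w + y)

namespace IsAddInvariantMean

variable (hM : IsAddInvariantMean M)
include hM

lemma lipschitzWith_equivariantExtension (hρ : LipschitzWith K ρ) (g : Y →L[ℝ] ℝ) :
    LipschitzWith (‖g‖₊ * K) (equivariantExtension M ρ g) :=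
  LipschitzWith.of_dist_le_mul fun v w => by
    rw [Real.dist_eq, dist_eq_norm, equivariantExtension_apply, equivariantExtension_apply,
      ← map_sub, NNReal.coe_mul, coe_nnnorm]
    exact hM.abs_map_le fun y => hρ.abs_apply_sub_sub_le g v w y

lemma equivariantExtension_add_coe (hρ : LipschitzWith K ρ) (hρY : ∀ y : Y, ρ y = y)
    (g : Y →L[ℝ] ℝ) (v : X) (y₀ : Y) :
    equivariantExtension M ρ g (v + y₀) = equivariantExtension M ρ g v + g y₀ := by
  have hbdd : (fun y : Y => g (ρ (v + y) - y)) ∈ boundedFunctions Y :=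
    ⟨‖g‖ * K * ‖v‖, fun y => by simpa [hρY] using hρ.abs_apply_sub_sub_le g v 0 y⟩
  have hsplit : (fun y : Y => g (ρ (v + y₀ + y) - y))
      = (fun y => g (ρ (v + ↑(y + y₀)) - (y + y₀))) + fun _ => g y₀ := by
    ext y
    simp only [Pi.add_apply, Submodule.coe_add, map_sub, map_add]
    rw [add_comm (y : X), add_assoc]
    ring
  rw [equivariantExtension_apply, hsplit, map_add, hM.map_comp_add_right _ hbdd y₀,
    hM.map_const]
  rfl

end IsAddInvariantMean

end EquivariantExtension

section DualExtension

variable {X : Type*} [NormedAddCommGroup X] [NormedSpace ℝ X] {Y : Submodule ℝ X}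
  {MX : (X → ℝ) →ₗ[ℝ] ℝ} {MY : (Y → ℝ) →ₗ[ℝ] ℝ} {ρ : X → Y} {K : NNReal}

noncomputable def dualExtensionOfRetraction (hMX : IsAddInvariantMean MX)
    (hMY : IsAddInvariantMean MY) (hρ : LipschitzWith K ρ) :
    (Y →L[ℝ] ℝ) →L[ℝ] (X →L[ℝ] ℝ) :=
  LinearMap.mkContinuous
    { toFun g := hMX.linearizeCLM (hMY.lipschitzWith_equivariantExtension hρ g)
      map_add' g h := by
        ext x
        simp only [IsAddInvariantMean.linearizeCLM_apply, add_apply, map_add,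
          Pi.add_apply]
      map_smul' c g := by
        ext x
        simp only [IsAddInvariantMean.linearizeCLM_apply, smul_apply,
          map_smul, Pi.smul_apply, RingHom.id_apply] }
    K fun g => by
      refine (hMX.norm_linearizeCLM_le
        (hMY.lipschitzWith_equivariantExtension hρ g)).trans_eq ?_
      rw [NNReal.coe_mul, coe_nnnorm, mul_comm]

lemma dualExtensionOfRetraction_apply_coe (hMX : IsAddInvariantMean MX)
    (hMY : IsAddInvariantMean MY) (hρ : LipschitzWith K ρ) (hρY : ∀ y : Y, ρ y = y)
    (g : Y →L[ℝ] ℝ) (y : Y) : dualExtensionOfRetraction hMX hMY hρ g y = g y :=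
  hMX.linearize_apply_of_add_eq fun u => hMY.equivariantExtension_add_coe hρ hρY g u y

end DualExtension

theorem exists_dual_extension_operator_of_lipschitz_retract_general
    {X : Type*} [NormedAddCommGroup X] [NormedSpace ℝ X]
    (Y : Submodule ℝ X)
    (hret : ∃ (K : NNReal) (r : X → X),
      LipschitzWith K r ∧ Set.range r ⊆ (Y : Set X) ∧ ∀ y ∈ Y, r y = y) :
    ∃ G : (Y →L[ℝ] ℝ) →L[ℝ] (X →L[ℝ] ℝ),
      ∀ (g : Y →L[ℝ] ℝ) (y : Y), G g (y : X) = g y := by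
  obtain ⟨K, r, hr, hrange, hfix⟩ := hret
  have hρ : LipschitzWith K fun x => (⟨r x, hrange ⟨x, rfl⟩⟩ : Y) := hr.subtype_mk _
  obtain ⟨MX, hMX⟩ := exists_isAddInvariantMean X
  obtain ⟨MY, hMY⟩ := exists_isAddInvariantMean Y
  exact ⟨dualExtensionOfRetraction hMX hMY hρ,
    dualExtensionOfRetraction_apply_coe hMX hMY hρ fun y => Subtype.ext (hfix y y.2)⟩

/-- If a closed linear subspace `Y` of a real Banach space `X` is a Lipschitz retract
of `X`, then there is a bounded linear extension operator `G : Y* → X*`. -/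
theorem exists_dual_extension_operator_of_lipschitz_retract
    {X : Type*} [NormedAddCommGroup X] [NormedSpace ℝ X] [CompleteSpace X]
    (Y : Submodule ℝ X) (hYc : IsClosed (Y : Set X))
    (hret : ∃ (K : NNReal) (r : X → X),
      LipschitzWith K r ∧ Set.range r ⊆ (Y : Set X) ∧ ∀ y ∈ Y, r y = y) :
    ∃ G : (Y →L[ℝ] ℝ) →L[ℝ] (X →L[ℝ] ℝ),
      ∀ (g : Y →L[ℝ] ℝ) (y : Y), G g (y : X) = g y :=
  exists_dual_extension_operator_of_lipschitz_retract_general Y hret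
end

section
/- Let X be a real Banach space and Y a closed linear subspace of X such that (i) Y is a Lipschitz retract of X (there are a constant K and a K-Lipschitz map r : X → X with range contained in Y and r(y) = y for all y ∈ Y), and (ii) Y is complemented in its bidual, i.e., there is a continuous linear map P : Y** → Y with P(ĵ(y)) = y for all y ∈ Y, where ĵ : Y → Y** is the canonical embedding. Then Y is complemented in X: there exists a continuous linear map Q : X → X with range equal to Y and Q(y) = y for every y ∈ Y. -/
/-!
Lindenstrauss's averaging argument. By Banach–Alaoglu, the maps `φ : X → F*` that are Lipschitz
for the dual norm and extend a given `T : E →L[ℝ] F*` along `j : E → X` form a nonempty compact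
convex set for the pointwise weak-* topology. The operators `φ ↦ φ (· + v) - φ v` commute, so the
Markov–Kakutani theorem (proved with Cesàro means) gives a common fixed point of those with
`v ∈ j E`; such a `φ` is additive along `j E`, the set of these is invariant under all the
operators, and a second common fixed point is an additive Lipschitz map, i.e. a bounded linear
extension of `T` to `X`. For `T` the canonical embedding `Y → Y**`, composing with the projection
`Y** → Y` gives the projection of `X` onto `Y`.
-/

open Set Function Filter Topology Metric NormedSpace WeakDual

noncomputable def cesaroMean {A : Type*} [Ring A] [Algebra ℝ A] (a : A) (n : ℕ) : A :=
  ((n : ℝ) + 1)⁻¹ • ∑ i ∈ Finset.range (n + 1), a ^ i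

section Cesaro

variable {A : Type*} [Ring A] [Algebra ℝ A]

theorem mul_cesaroMean_sub (a : A) (n : ℕ) :
    a * cesaroMean a n - cesaroMean a n = ((n : ℝ) + 1)⁻¹ • (a ^ (n + 1) - 1) := by
  rw [cesaroMean, mul_smul_comm, ← smul_sub, ← sub_one_mul, mul_geom_sum]

theorem Subalgebra.cesaroMean_mem (S : Subalgebra ℝ A) {a : A} (ha : a ∈ S) (n : ℕ) :
    cesaroMean a n ∈ S :=
  S.smul_mem (S.sum_mem fun i _ => S.pow_mem ha i) _

end Cesaro

section MarkovKakutani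

variable {E : Type*} [AddCommGroup E] [Module ℝ E]

theorem convex_fixedPoints {𝓕 : Type*} [FunLike 𝓕 E E] [LinearMapClass 𝓕 ℝ E E] (T : 𝓕) :
    Convex ℝ (fixedPoints T) := by
  intro x hx y hy a b _ _ _
  simp_all [mem_fixedPoints, IsFixedPt]

variable [TopologicalSpace E]

theorem Bornology.IsVonNBounded.eq_zero_of_forall_eq_inv_smul [T2Space E] {B : Set E}
    (hB : Bornology.IsVonNBounded ℝ B) {z : E}
    (hz : ∀ n : ℕ, ∃ b ∈ B, z = ((n : ℝ) + 1)⁻¹ • b) : z = 0 := by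
  choose b hbB hzb using hz
  have hlim : Tendsto (fun n : ℕ => ((n : ℝ) + 1)⁻¹ • b n) atTop (𝓝 0) :=
    hB.smul_tendsto_zero (.of_forall hbB)
      (by simpa using tendsto_one_div_add_atTop_nhds_zero_nat (𝕜 := ℝ))
  simp only [← hzb] at hlim
  exact tendsto_nhds_unique tendsto_const_nhds hlim

variable [IsTopologicalAddGroup E] [ContinuousSMul ℝ E]

theorem Convex.mapsTo_cesaroMean {K : Set E} (hK : Convex ℝ K) {T : E →L[ℝ] E}
    (hT : MapsTo T K K) (n : ℕ) : MapsTo ⇑(cesaroMean T n) K K := by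
  intro x hx
  rw [cesaroMean, smul_apply, _root_.sum_apply, Finset.smul_sum]
  refine hK.sum_mem (fun _ _ => by positivity) ?_ fun i _ => ?_
  · rw [Finset.sum_const, Finset.card_range, nsmul_eq_mul]
    push_cast
    field_simp
  · rw [FunLike.coe_pow_eq_iterate]
    exact hT.iterate i hx

theorem IsCompact.exists_mem_forall_isFixedPt [T2Space E] {K : Set E} (hKc : IsCompact K)
    (hKconv : Convex ℝ K) (hne : K.Nonempty) {ι : Type*} (T : ι → E →L[ℝ] E)
    (hcomm : ∀ i j, Commute (T i) (T j)) (hT : ∀ i, MapsTo (T i) K K) :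
    ∃ x ∈ K, ∀ i, IsFixedPt (T i) x := by
  set 𝒜 := Algebra.adjoin ℝ (range T)
  have h𝒜comm : ∀ A ∈ 𝒜, ∀ B ∈ 𝒜, Commute A B := fun A hA B hB =>
    Algebra.commute_of_mem_adjoin_of_forall_mem_commute hB fun _ ⟨j, hj⟩ =>
      hj ▸ (Algebra.commute_of_mem_adjoin_of_forall_mem_commute hA fun _ ⟨i, hi⟩ =>
        hi ▸ hcomm j i).symm
  let S := {A : E →L[ℝ] E // A ∈ 𝒜 ∧ MapsTo A K K}
  have : Nonempty S := ⟨⟨1, 𝒜.one_mem, mapsTo_id K⟩⟩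
  -- Since `𝒜` is commutative, `(A * B) '' K ⊆ A '' K ∩ B '' K`: the images are directed.
  obtain ⟨q, hq⟩ : (⋂ A : S, (A : E →L[ℝ] E) '' K).Nonempty := by
    refine IsCompact.nonempty_iInter_of_directed_nonempty_isCompact_isClosed
      (fun A : S => (A : E →L[ℝ] E) '' K)
      (fun A B => ⟨⟨A * B, 𝒜.mul_mem A.2.1 B.2.1, A.2.2.comp B.2.2⟩, ?_, ?_⟩)
      (fun A => hne.image _) (fun A => hKc.image A.1.continuous)
      (fun A => (hKc.image A.1.continuous).isClosed)
    · rintro _ ⟨x, hx, rfl⟩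
      exact ⟨B.1 x, B.2.2 hx, rfl⟩
    · rintro _ ⟨x, hx, rfl⟩
      exact ⟨A.1 x, A.2.2 hx, congr($((h𝒜comm _ A.2.1 _ B.2.1).eq) x).symm⟩
  have hqA : ∀ A ∈ 𝒜, MapsTo A K K → q ∈ A '' K := fun A h𝒜 hK => mem_iInter.1 hq ⟨A, h𝒜, hK⟩
  refine ⟨q, by simpa using hqA 1 𝒜.one_mem (mapsTo_id K), fun i => ?_⟩
  have hTi : T i ∈ 𝒜 := Algebra.subset_adjoin (mem_range_self i)
  -- `q` lies in the image of every Cesàro mean, so `T i q - q ∈ (n + 1)⁻¹ • (K - K)` for all `n`.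
  rw [IsFixedPt, ← sub_eq_zero]
  refine ((hKc.isVonNBounded ℝ).sub (hKc.isVonNBounded ℝ)).eq_zero_of_forall_eq_inv_smul
    fun n => ?_
  obtain ⟨x, hx, rfl⟩ := hqA _ (𝒜.cesaroMean_mem hTi n) (hKconv.mapsTo_cesaroMean (hT i) n)
  refine ⟨(T i ^ (n + 1)) x - x, sub_mem_sub ?_ hx, ?_⟩
  · rw [FunLike.coe_pow_eq_iterate]
    exact (hT i).iterate _ hx
  · simpa using congr($(mul_cesaroMean_sub (T i) n) x)

end MarkovKakutani

section ShiftSub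

variable (R : Type*) {G M : Type*} [Ring R] [AddCommGroup G] [AddCommGroup M] [Module R M]
  [TopologicalSpace M] [IsTopologicalAddGroup M]

def shiftSub (v : G) : (G → M) →L[R] (G → M) :=
  ContinuousLinearMap.pi fun x =>
    ContinuousLinearMap.proj (R := R) (φ := fun _ : G => M) (x + v) - ContinuousLinearMap.proj v

variable {R}

@[simp]
theorem shiftSub_apply (v : G) (φ : G → M) (x : G) : shiftSub R v φ x = φ (x + v) - φ v := rfl

theorem commute_shiftSub (v w : G) :
    Commute (shiftSub R v : (G → M) →L[R] (G → M)) (shiftSub R w) := by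
  ext φ x
  simp only [mul_apply_eq_comp, shiftSub_apply, add_right_comm x v w, add_comm v w]
  abel

theorem isFixedPt_shiftSub_iff {v : G} {φ : G → M} :
    IsFixedPt (shiftSub R v) φ ↔ ∀ x, φ (x + v) = φ x + φ v := by
  simp only [IsFixedPt, funext_iff, shiftSub_apply, sub_eq_iff_eq_add]

theorem mapsTo_shiftSub_fixedPoints (v w : G) :
    MapsTo (shiftSub R w) (fixedPoints (shiftSub R v : (G → M) →L[R] (G → M)))
      (fixedPoints (shiftSub R v)) :=
  Semiconj.mapsTo_fixedPoints fun φ => congr($((commute_shiftSub w v).eq) φ)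

end ShiftSub

section LipschitzWeakDual

variable {X F : Type*} [PseudoMetricSpace X] [NormedAddCommGroup F] [NormedSpace ℝ F]

theorem lipschitzWith_toStrongDual_comp_iff {K : NNReal} {φ : X → WeakDual ℝ F} :
    LipschitzWith K (toStrongDual ∘ φ) ↔
      ∀ x x', toStrongDual (φ x - φ x') ∈ closedBall 0 (K * dist x x') := by
  simp only [lipschitzWith_iff_dist_le_mul, mem_closedBall_zero_iff, comp_apply, map_sub,
    dist_eq_norm]

theorem isClosed_setOf_lipschitzWith_toStrongDual (K : NNReal) :
    IsClosed {φ : X → WeakDual ℝ F | LipschitzWith K (toStrongDual ∘ φ)} := by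
  simp only [lipschitzWith_toStrongDual_comp_iff, ofPred_forall]
  exact isClosed_iInter fun x => isClosed_iInter fun x' =>
    (WeakDual.isClosed_closedBall _ _).preimage ((continuous_apply x).sub (continuous_apply x'))

theorem convex_setOf_lipschitzWith_toStrongDual (K : NNReal) :
    Convex ℝ {φ : X → WeakDual ℝ F | LipschitzWith K (toStrongDual ∘ φ)} := by
  intro φ hφ ψ hψ a b ha hb hab
  simp only [mem_ofPred_eq, lipschitzWith_toStrongDual_comp_iff] at *
  intro x x'
  have key : toStrongDual ((a • φ + b • ψ) x - (a • φ + b • ψ) x') =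
      a • toStrongDual (φ x - φ x') + b • toStrongDual (ψ x - ψ x') := by
    simp only [Pi.add_apply, Pi.smul_apply, map_sub, map_add, map_smul]
    module
  rw [key]
  exact convex_closedBall _ _ (hφ x x') (hψ x x') ha hb hab

end LipschitzWeakDual

section LipschitzExtensions

variable {X E F : Type*} [NormedAddCommGroup X] [NormedAddCommGroup E] [NormedSpace ℝ E]
  [NormedAddCommGroup F] [NormedSpace ℝ F]

def lipschitzWeakDualExtensions (j : E →+ X) (T : E →L[ℝ] StrongDual ℝ F) (C : NNReal) :
    Set (X → WeakDual ℝ F) :=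
  {φ | LipschitzWith C (toStrongDual ∘ φ)} ∩ {φ | ∀ e, φ (j e) = StrongDual.toWeakDual (T e)}

variable {j : E →+ X} {T : E →L[ℝ] StrongDual ℝ F} {C : NNReal}

theorem norm_le_of_mem_lipschitzWeakDualExtensions {φ : X → WeakDual ℝ F}
    (hφ : φ ∈ lipschitzWeakDualExtensions j T C) (x : X) : ‖toStrongDual (φ x)‖ ≤ C * ‖x‖ := by
  have h0 : φ 0 = 0 := by simpa using hφ.2 0
  simpa [h0] using lipschitzWith_toStrongDual_comp_iff.1 hφ.1 x 0

theorem isCompact_lipschitzWeakDualExtensions : IsCompact (lipschitzWeakDualExtensions j T C) := by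
  refine (isCompact_univ_pi fun x => WeakDual.isCompact_closedBall 0 (C * ‖x‖)).of_isClosed_subset
    ?_ fun φ hφ => mem_univ_pi.2 fun x => by
      simpa using norm_le_of_mem_lipschitzWeakDualExtensions hφ x
  refine (isClosed_setOf_lipschitzWith_toStrongDual C).inter ?_
  simp only [ofPred_forall]
  exact isClosed_iInter fun y => isClosed_eq (continuous_apply _) continuous_const

theorem convex_lipschitzWeakDualExtensions : Convex ℝ (lipschitzWeakDualExtensions j T C) := by
  refine (convex_setOf_lipschitzWith_toStrongDual C).inter fun φ hφ ψ hψ a b _ _ hab e => ?_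
  simp_all [← add_smul]

theorem lipschitzWeakDualExtensions_nonempty {K : NNReal} {r : X → E} (hr : LipschitzWith K r)
    (hrj : ∀ e, r (j e) = e) : (lipschitzWeakDualExtensions j T (‖T‖₊ * K)).Nonempty := by
  refine ⟨fun x => StrongDual.toWeakDual (T (r x)), ?_, fun e => by simp [hrj]⟩
  simpa [comp_def] using T.lipschitz.comp hr

theorem lipschitzWith_toStrongDual_comp_shiftSub {φ : X → WeakDual ℝ F}
    (hφ : LipschitzWith C (toStrongDual ∘ φ)) (w : X) :
    LipschitzWith C (toStrongDual ∘ shiftSub ℝ w φ) := by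
  rw [lipschitzWith_toStrongDual_comp_iff] at hφ ⊢
  intro x x'
  simpa using hφ (x + w) (x' + w)

theorem mapsTo_shiftSub_lipschitzWeakDualExtensions (e : E) :
    MapsTo (shiftSub ℝ (j e)) (lipschitzWeakDualExtensions j T C)
      (lipschitzWeakDualExtensions j T C) :=
  fun φ hφ => ⟨lipschitzWith_toStrongDual_comp_shiftSub hφ.1 _, fun e' => by
    rw [shiftSub_apply, ← map_add, hφ.2, hφ.2, map_add, map_add, add_sub_cancel_right]⟩

theorem mapsTo_shiftSub_lipschitzWeakDualExtensions_inter_fixedPoints (w : X) :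
    MapsTo (shiftSub ℝ w)
      (lipschitzWeakDualExtensions j T C ∩ ⋂ e, fixedPoints (shiftSub ℝ (j e)))
      (lipschitzWeakDualExtensions j T C ∩ ⋂ e, fixedPoints (shiftSub ℝ (j e))) := by
  rintro φ ⟨hφ, hφfix⟩
  rw [mem_iInter] at hφfix
  refine ⟨⟨lipschitzWith_toStrongDual_comp_shiftSub hφ.1 w, fun e => ?_⟩,
    mem_iInter.2 fun e => mapsTo_shiftSub_fixedPoints _ w (hφfix e)⟩
  rw [shiftSub_apply, add_comm, isFixedPt_shiftSub_iff.1 (hφfix e), ← hφ.2 e, add_sub_cancel_left]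

theorem exists_extension_of_lipschitz_retraction [NormedSpace ℝ X] {K : NNReal} {r : X → E}
    (hr : LipschitzWith K r) (hrj : ∀ e, r (j e) = e) (T : E →L[ℝ] StrongDual ℝ F) :
    ∃ L : X →L[ℝ] StrongDual ℝ F, ∀ e, L (j e) = T e := by
  set K₀ := lipschitzWeakDualExtensions j T (‖T‖₊ * K)
  obtain ⟨φ₁, hφ₁, hφ₁fix⟩ := (isCompact_lipschitzWeakDualExtensions : IsCompact K₀)
    |>.exists_mem_forall_isFixedPt convex_lipschitzWeakDualExtensions
      (lipschitzWeakDualExtensions_nonempty hr hrj) (fun e => shiftSub ℝ (j e))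
      (fun _ _ => commute_shiftSub _ _) mapsTo_shiftSub_lipschitzWeakDualExtensions
  set K₁ := K₀ ∩ ⋂ e, fixedPoints (shiftSub ℝ (j e))
  have hK₁ : IsCompact K₁ := isCompact_lipschitzWeakDualExtensions.inter_right
    (isClosed_iInter fun e => isClosed_fixedPoints (shiftSub ℝ (j e)).continuous)
  have hK₁conv : Convex ℝ K₁ := convex_lipschitzWeakDualExtensions.inter
    (convex_iInter fun e => convex_fixedPoints (shiftSub ℝ (j e)))
  obtain ⟨φ, ⟨⟨hφlip, hφj⟩, -⟩, hφfix⟩ := hK₁.exists_mem_forall_isFixedPt hK₁conv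
    ⟨φ₁, hφ₁, mem_iInter.2 hφ₁fix⟩ (fun w : X => shiftSub ℝ w) (fun _ _ => commute_shiftSub _ _)
    mapsTo_shiftSub_lipschitzWeakDualExtensions_inter_fixedPoints
  have hadd : ∀ x w, toStrongDual (φ (x + w)) = toStrongDual (φ x) + toStrongDual (φ w) :=
    fun x w => by rw [isFixedPt_shiftSub_iff.1 (hφfix w) x, map_add]
  exact ⟨(AddMonoidHom.mk' (toStrongDual ∘ φ) hadd).toRealLinearMap hφlip.continuous,
    fun e => (congrArg toStrongDual (hφj e)).trans (StrongDual.toStrongDual_toWeakDual _)⟩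

end LipschitzExtensions

theorem complemented_of_lipschitz_retract_of_complemented_in_bidual_general
    {X : Type*} [NormedAddCommGroup X] [NormedSpace ℝ X]
    (Y : Submodule ℝ X)
    (hret : ∃ (K : NNReal) (r : X → X),
      LipschitzWith K r ∧ Set.range r ⊆ (Y : Set X) ∧ ∀ y ∈ Y, r y = y)
    (hbidual : ∃ P : StrongDual ℝ (StrongDual ℝ Y) →L[ℝ] Y,
      ∀ y : Y, P (NormedSpace.inclusionInDoubleDual ℝ Y y) = y) :
    ∃ Q : X →L[ℝ] X, Set.range Q = (Y : Set X) ∧ ∀ y ∈ Y, Q y = y := by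
  obtain ⟨K, r, hr, hrY, hrfix⟩ := hret
  obtain ⟨P, hP⟩ := hbidual
  obtain ⟨L, hL⟩ := exists_extension_of_lipschitz_retraction (j := Y.subtype.toAddMonoidHom)
    (hr.subtype_mk fun x => hrY (mem_range_self x)) (fun y => Subtype.ext (hrfix y y.2))
    (inclusionInDoubleDual ℝ Y)
  have hQ : ∀ y ∈ Y, (Y.subtypeL ∘L P ∘L L) y = y := fun y hy => by
    have hLy : L y = inclusionInDoubleDual ℝ Y ⟨y, hy⟩ := hL ⟨y, hy⟩
    simp [hLy, hP]
  refine ⟨Y.subtypeL ∘L P ∘L L, (range_subset_iff.2 fun x => (P (L x)).2).antisymm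
    fun y hy => ⟨y, hQ y hy⟩, hQ⟩

/-- If a closed linear subspace `Y` of a real Banach space `X` is a Lipschitz retract
of `X` and `Y` is complemented in its bidual, then `Y` is complemented in `X`. -/
theorem complemented_of_lipschitz_retract_of_complemented_in_bidual
    {X : Type*} [NormedAddCommGroup X] [NormedSpace ℝ X] [CompleteSpace X]
    (Y : Submodule ℝ X) (hYc : IsClosed (Y : Set X))
    (hret : ∃ (K : NNReal) (r : X → X),
      LipschitzWith K r ∧ Set.range r ⊆ (Y : Set X) ∧ ∀ y ∈ Y, r y = y)
    (hbidual : ∃ P : StrongDual ℝ (StrongDual ℝ Y) →L[ℝ] Y,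
      ∀ y : Y, P (NormedSpace.inclusionInDoubleDual ℝ Y y) = y) :
    ∃ Q : X →L[ℝ] X, Set.range Q = (Y : Set X) ∧ ∀ y ∈ Y, Q y = y :=
  complemented_of_lipschitz_retract_of_complemented_in_bidual_general Y hret hbidual
end
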